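/- arXiv:0911.5458 — 3 statements merged into one kernel-verified Lean document; each statement's English description precedes it below -/
import Mathlib

section
/- Let d, l, n, s be integers with d ≥ 1, l ≥ 0, d + l ≤ n, and 1 ≤ s ≤ ⌊(n−d−l)/(d+l+1)⌋, and set m = (n+1)s + n. For A ⊆ [n] with |A| = d+l, let Ã = A ∪ {n+1, n+2, …, 2n−(d+l)} ⊆ [m]. Then in the block structure of Ã with respect to density s+1 on the circular representation of [m], the consecutive elements n+1, n+2, …, m all lie in a single block; consequently 𝒢_{s+1}(Ã) ⊆ [n] and f_{s+1}(Ã) ∩ {n+1, …, m} = {n+1, …, 2n−(d+l)}. -/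
/-- The point of the circular representation of `[N] = {1, …, N}` reached from the
point `x` after `t` clockwise steps. -/
def cpt (N x t : ℕ) : ℕ := (x - 1 + t) % N + 1

/-- The block of `len` clockwise-consecutive points of the circular representation
of `[N]` starting at the point `x`. -/
def cblock (N x len : ℕ) : Finset ℕ := (Finset.range len).image (cpt N x)

/-- Data describing a candidate block structure on the circular representation of a
set `[N]`: the number `p` of blocks, the first (clockwise) element `b i` of the `i`-th
block `B i`, the length `lenB i` of `B i`, and the length `lenG i` of the gap `G i`
following `B i` clockwise (only the indices `i < p` are relevant). -/
structure CircData where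
  p : ℕ
  b : ℕ → ℕ
  lenB : ℕ → ℕ
  lenG : ℕ → ℕ

/-- The `i`-th block `B i` of the data `S` on the circular representation of `[N]`. -/
def CircData.Blk (S : CircData) (N i : ℕ) : Finset ℕ := cblock N (S.b i) (S.lenB i)

/-- The `i`-th gap `G i` of the data `S`, which follows the block `B i` clockwise. -/
def CircData.Gap (S : CircData) (N i : ℕ) : Finset ℕ :=
  cblock N (cpt N (S.b i) (S.lenB i)) (S.lenG i)

/-- `S` describes the block structure `B_1, G_1, B_2, G_2, …, B_p, G_p` of the set `A`
with respect to the density `δ` on the circular representation of `[N]`. -/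
def IsBlockStructure (N : ℕ) (A : Finset ℕ) (δ : ℝ) (S : CircData) : Prop :=
  0 < S.p ∧
  -- each block is nonempty (it contains its first element `b i`)
  (∀ i < S.p, 0 < S.lenB i) ∧
  -- the blocks and gaps are arranged consecutively clockwise, cyclically
  (∀ i, i + 1 < S.p → S.b (i + 1) = cpt N (S.b i) (S.lenB i + S.lenG i)) ∧
  S.b 0 = cpt N (S.b (S.p - 1)) (S.lenB (S.p - 1) + S.lenG (S.p - 1)) ∧
  -- the blocks and gaps form a partition of `[N]`
  ((Finset.range S.p).biUnion (fun i => S.Blk N i ∪ S.Gap N i) = Finset.Icc 1 N) ∧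
  (∀ i < S.p, ∀ j < S.p, i ≠ j →
    Disjoint (S.Blk N i ∪ S.Gap N i) (S.Blk N j ∪ S.Gap N j)) ∧
  (∀ i < S.p, Disjoint (S.Blk N i) (S.Gap N i)) ∧
  -- (i) the first (clockwise) element of each block belongs to `A`
  (∀ i < S.p, S.b i ∈ A) ∧
  -- (ii) the gaps are disjoint from `A`
  (∀ i < S.p, ∀ x ∈ S.Gap N i, x ∉ A) ∧
  -- (iii) `δ·|A ∩ B i| − 1 < |B i| ≤ δ·|A ∩ B i|`
  (∀ i < S.p, δ * ((A ∩ S.Blk N i).card : ℝ) - 1 < ((S.Blk N i).card : ℝ) ∧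
    ((S.Blk N i).card : ℝ) ≤ δ * ((A ∩ S.Blk N i).card : ℝ)) ∧
  -- (iv) every proper initial segment `[b i, y] ⊊ B i` satisfies
  -- `|[b i, y]| + 1 ≤ δ·|[b i, y] ∩ A|`
  (∀ i < S.p, ∀ t, 0 < t → t < S.lenB i →
    ((cblock N (S.b i) t).card : ℝ) + 1 ≤ δ * ((cblock N (S.b i) t ∩ A).card : ℝ))

/-- The union `𝒢_δ(A) = G_1 ∪ ⋯ ∪ G_p` of the gaps of the block structure `S`. -/
def CircData.gapsUnion (S : CircData) (N : ℕ) : Finset ℕ :=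
  (Finset.range S.p).biUnion (S.Gap N)

/-- `f_δ(A) = A ∪ 𝒢_δ(A)`, computed from the block structure `S` of `A` on `[N]`. -/
def fdelta (A : Finset ℕ) (S : CircData) (N : ℕ) : Finset ℕ := A ∪ S.gapsUnion N

lemma cblock_of_no_wrap (N x len : ℕ) (hx : 1 ≤ x) (h : x + len ≤ N + 1) :
    cblock N x len = Finset.Ico x (x + len) := by
  ext y
  simp only [cblock, cpt, Finset.mem_image, Finset.mem_range, Finset.mem_Ico]
  constructor
  · rintro ⟨t, ht, rfl⟩
    rw [Nat.mod_eq_of_lt (by omega)]; omega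
  · intro ⟨h1, h2⟩
    exact ⟨y - x, by omega, by rw [Nat.mod_eq_of_lt (by omega)]; omega⟩

lemma cblock_of_wrap (N x len : ℕ) (hx : 1 ≤ x) (hxN : x ≤ N) (hlen : len ≤ N)
    (h : N + 1 < x + len) :
    cblock N x len = Finset.Ico x (N + 1) ∪ Finset.Ico 1 (x + len - N) := by
  ext y
  simp only [cblock, cpt, Finset.mem_image, Finset.mem_range, Finset.mem_Ico,
    Finset.mem_union]
  constructor
  · rintro ⟨t, ht, rfl⟩
    rcases le_or_gt (x + t) N with h1 | h1
    · left; rw [Nat.mod_eq_of_lt (by omega)]; omega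
    · right
      have e : (x - 1 + t) % N = x - 1 + t - N := by
        rw [Nat.mod_eq_sub_mod (by omega), Nat.mod_eq_of_lt (by omega)]
      rw [e]; omega
  · rintro (⟨h1, h2⟩ | ⟨h1, h2⟩)
    · exact ⟨y - x, by omega, by rw [Nat.mod_eq_of_lt (by omega)]; omega⟩
    · refine ⟨y + N - x, by omega, ?_⟩
      have e : x - 1 + (y + N - x) = (y - 1) + N := by omega
      rw [e, Nat.add_mod_right, Nat.mod_eq_of_lt (by omega)]; omega

lemma cblock_card (N x len : ℕ) (hx1 : 1 ≤ x) (hxN : x ≤ N) (hlen : len ≤ N) :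
    (cblock N x len).card = len := by
  rcases le_or_gt (x + len) (N + 1) with h | h
  · rw [cblock_of_no_wrap N x len hx1 h, Nat.card_Ico]; omega
  · rw [cblock_of_wrap N x len hx1 hxN hlen h, Finset.card_union_of_disjoint,
      Nat.card_Ico, Nat.card_Ico]
    · omega
    · rw [Finset.disjoint_left]
      intro y hy hy2
      rw [Finset.mem_Ico] at hy hy2
      omega

lemma Icc_subset_cblock (N x len : ℕ) (hx1 : 1 ≤ x) (hxN : x ≤ N) (h : N ≤ len) :
    Finset.Icc 1 N ⊆ cblock N x len := by
  intro y hy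
  rw [Finset.mem_Icc] at hy
  simp only [cblock, cpt, Finset.mem_image, Finset.mem_range]
  rcases le_or_gt x y with h1 | h1
  · exact ⟨y - x, by omega, by rw [Nat.mod_eq_of_lt (by omega)]; omega⟩
  · refine ⟨y + N - x, by omega, ?_⟩
    have e : x - 1 + (y + N - x) = (y - 1) + N := by omega
    rw [e, Nat.add_mod_right, Nat.mod_eq_of_lt (by omega)]; omega

/-- Let `d ≥ 1`, `l ≥ 0`, `d + l ≤ n`, `1 ≤ s ≤ ⌊(n−d−l)/(d+l+1)⌋`
and `m = (n+1)s + n`. For `A ⊆ [n]` with `|A| = d + l`, let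
`Ã = A ∪ {n+1, …, 2n−(d+l)} ⊆ [m]`. Then in the block structure of `Ã` with respect
to density `s+1` on `[m]`, the consecutive elements `n+1, …, m` lie in a single block;
consequently `𝒢_{s+1}(Ã) ⊆ [n]` and `f_{s+1}(Ã) ∩ {n+1, …, m} = {n+1, …, 2n−(d+l)}`. -/
theorem tail_in_single_block (d l n s m : ℕ) (hd : 1 ≤ d) (hdl : d + l ≤ n)
    (hs1 : 1 ≤ s) (hs2 : s ≤ (n - d - l) / (d + l + 1))
    (hm : m = (n + 1) * s + n)
    (A : Finset ℕ) (hA : A ⊆ Finset.Icc 1 n) (hAcard : A.card = d + l)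
    (S : CircData)
    (hS : IsBlockStructure m (A ∪ Finset.Icc (n + 1) (2 * n - (d + l))) ((s : ℝ) + 1) S) :
    (∃ i < S.p, Finset.Icc (n + 1) m ⊆ S.Blk m i) ∧
    S.gapsUnion m ⊆ Finset.Icc 1 n ∧
    fdelta (A ∪ Finset.Icc (n + 1) (2 * n - (d + l))) S m ∩ Finset.Icc (n + 1) m =
      Finset.Icc (n + 1) (2 * n - (d + l)) := by
  obtain ⟨hp, hlenB, _hch, _hch0, hpart, hdisj, hdisjBG, hbmem, hgapA, hiii, hiv⟩ := hS
  set k := d + l with hk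
  set T := Finset.Icc (n + 1) (2 * n - k) with hT
  set At := A ∪ T with hAt
  -- numeric setup
  have hsk : s * (k + 1) ≤ n - d - l := (Nat.le_div_iff_mul_le (by omega)).mp hs2
  set q := n - k with hq
  have hnq : n = k + q := by omega
  have hskq : s * (k + 1) ≤ q := by omega
  have hk1q : k + 1 ≤ q := le_trans (Nat.le_mul_of_pos_left _ hs1) hskq
  -- m is large
  have hMs : (n + 1) * s = n * s + s := by ring
  have hns : n * s = s * n := by ring
  have h1n : 1 * n ≤ s * n := Nat.mul_le_mul_right n hs1
  have hm2n : 2 * n + 1 ≤ m := by omega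
  -- card of At
  have hAT_disj : Disjoint A T := by
    rw [Finset.disjoint_left]
    intro x hx hxT
    have h1 := hA hx
    rw [Finset.mem_Icc] at h1
    rw [hT, Finset.mem_Icc] at hxT
    omega
  have hAtcard : At.card = n := by
    rw [hAt, Finset.card_union_of_disjoint hAT_disj, hAcard, hT, Nat.card_Icc]
    omega
  -- find the block containing n+1
  have hn1At : n + 1 ∈ At := by
    rw [hAt, Finset.mem_union, hT, Finset.mem_Icc]
    right; omega
  have hn1cir : n + 1 ∈ (Finset.range S.p).biUnion (fun i => S.Blk m i ∪ S.Gap m i) := by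
    rw [hpart, Finset.mem_Icc]; omega
  rw [Finset.mem_biUnion] at hn1cir
  obtain ⟨i, hir, hn1i⟩ := hn1cir
  rw [Finset.mem_range] at hir
  rw [Finset.mem_union] at hn1i
  have hn1B : n + 1 ∈ S.Blk m i := by
    rcases hn1i with h | h
    · exact h
    · exact absurd hn1At (hgapA i hir _ h)
  clear hn1i
  set b := S.b i with hbdef
  set L := S.lenB i with hLdef
  have hbAt : b ∈ At := hbmem i hir
  have hb1 : 1 ≤ b ∧ b ≤ 2 * n - k := by
    rw [hAt, Finset.mem_union] at hbAt
    rcases hbAt with h | h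
    · have := hA h; rw [Finset.mem_Icc] at this; omega
    · rw [hT, Finset.mem_Icc] at h; omega
  have hL0 : 0 < L := hlenB i hir
  -- the cardinality of the block
  set a := (At ∩ S.Blk m i).card with ha
  have haN : a ≤ n := by
    rw [ha, ← hAtcard]
    exact Finset.card_le_card Finset.inter_subset_left
  have hBcard_le : (S.Blk m i).card ≤ (s + 1) * a := by
    have h2 := (hiii i hir).2
    have : ((S.Blk m i).card : ℝ) ≤ (((s + 1) * a : ℕ) : ℝ) := by push_cast; linarith
    exact_mod_cast this
  have hsa : (s + 1) * a ≤ (s + 1) * n := Nat.mul_le_mul_left _ haN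
  have hsn : (s + 1) * n = s * n + n := by ring
  have hLm : L ≤ m := by
    by_contra hcon
    push_neg at hcon
    have hsub2 : Finset.Icc 1 m ⊆ S.Blk m i :=
      Icc_subset_cblock m b L hb1.1 (by omega) (by omega)
    have hcard_ge : m ≤ (S.Blk m i).card := by
      calc m = (Finset.Icc 1 m).card := by rw [Nat.card_Icc]; omega
        _ ≤ _ := Finset.card_le_card hsub2
    omega
  have hBcard : (S.Blk m i).card = L :=
    cblock_card m b L hb1.1 (by omega) hLm
  have hLa : L = (s + 1) * a := by
    obtain ⟨h1, _⟩ := hiii i hir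
    rw [hBcard] at h1
    have h1' : ((s + 1) * a : ℕ) < L + 1 := by
      have : (((s + 1) * a : ℕ) : ℝ) < (L : ℝ) + 1 := by push_cast; linarith
      exact_mod_cast this
    omega
  -- key arithmetic fact
  have hkey : (n + 1) * s ≤ (s + 1) * q := by
    have e1 : (n + 1) * s = s * q + s * (k + 1) := by rw [hnq]; ring
    have e2 : (s + 1) * q = s * q + q := by ring
    omega
  -- the main claim : Icc (n+1) m ⊆ Blk i
  have hmain : Finset.Icc (n + 1) m ⊆ S.Blk m i := by
    rcases le_or_gt (b + L) (m + 1) with hnw | hw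
    · -- no wrap case
      have hBlk : S.Blk m i = Finset.Ico b (b + L) :=
        cblock_of_no_wrap m b L hb1.1 hnw
      rw [hBlk, Finset.mem_Ico] at hn1B
      obtain ⟨hbn1, hend⟩ := hn1B
      -- α and the prefix inequality
      set α := (A ∩ Finset.Ico b (n + 1)).card with hα
      have halpha : b + (s + 1) * α ≥ n + 2 ∨ (b = n + 1 ∧ (s + 1) * α = 0) := by
        rcases le_or_gt b n with hbn | hbn
        · left
          have hpref : cblock m b (n + 1 - b) = Finset.Ico b (n + 1) := by
            rw [cblock_of_no_wrap m b (n + 1 - b) hb1.1 (by omega)]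
            congr 1; omega
          have hPA : cblock m b (n + 1 - b) ∩ At = A ∩ Finset.Ico b (n + 1) := by
            rw [hpref]
            ext x
            simp only [Finset.mem_inter, Finset.mem_Ico, hAt, Finset.mem_union, hT,
              Finset.mem_Icc]
            constructor
            · rintro ⟨⟨hx1, hx2⟩, hx3 | ⟨hx4, hx5⟩⟩
              · exact ⟨hx3, hx1, hx2⟩
              · omega
            · rintro ⟨hx3, hx1, hx2⟩
              exact ⟨⟨hx1, hx2⟩, Or.inl hx3⟩
          have hiv' := hiv i hir (n + 1 - b) (by omega) (by omega)
          rw [hPA, hpref, Nat.card_Ico] at hiv'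
          have hnat : (n + 1 - b) + 1 ≤ (s + 1) * α := by
            have h2 : ((n + 1 - b : ℕ) : ℝ) + 1 ≤ (((s + 1) * α : ℕ) : ℝ) := by
              push_cast; linarith
            exact_mod_cast h2
          omega
        · right
          have hbe : b = n + 1 := by omega
          have hemp : Finset.Ico b (n + 1) = ∅ := by rw [hbe]; simp
          rw [hα, hemp, Finset.inter_empty, Finset.card_empty, Nat.mul_zero]
          exact ⟨hbe, rfl⟩
      -- compute a
      have hInt : At ∩ Finset.Ico b (b + L) =
          (A ∩ Finset.Ico b (n + 1)) ∪ Finset.Ico (n + 1) (min (b + L) (2 * n - k + 1)) := by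
        ext x
        simp only [Finset.mem_inter, Finset.mem_Ico, Finset.mem_union, hAt, hT,
          Finset.mem_Icc, lt_min_iff]
        constructor
        · rintro ⟨hx1 | ⟨hx2, hx3⟩, hx4, hx5⟩
          · left
            have := hA hx1; rw [Finset.mem_Icc] at this
            exact ⟨hx1, hx4, by omega⟩
          · right; omega
        · rintro (⟨hx1, hx2, hx3⟩ | ⟨hx1, hx2, hx3⟩)
          · have := hA hx1; rw [Finset.mem_Icc] at this
            exact ⟨Or.inl hx1, hx2, by omega⟩
          · exact ⟨Or.inr ⟨by omega, by omega⟩, by omega, by omega⟩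
      have hInt_disj : Disjoint (A ∩ Finset.Ico b (n + 1))
          (Finset.Ico (n + 1) (min (b + L) (2 * n - k + 1))) := by
        rw [Finset.disjoint_left]
        intro x hx hx2
        rw [Finset.mem_inter, Finset.mem_Ico] at hx
        rw [Finset.mem_Ico] at hx2
        omega
      have haval : a = α + (min (b + L) (2 * n - k + 1) - (n + 1)) := by
        rw [ha, hBlk, hInt, Finset.card_union_of_disjoint hInt_disj, Nat.card_Ico]
      -- split on whether block reaches beyond the tail
      rcases le_or_gt (b + L) (2 * n - k + 1) with hsmall | hbig
      · -- contradiction: block ends before the end of the tail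
        exfalso
        set u := b + L - (n + 1) with hu
        have hu1 : 1 ≤ u := by omega
        have havalu : a = α + u := by omega
        have hLdist : L = (s + 1) * α + (s + 1) * u := by
          rw [hLa, havalu]; ring
        have h2u : 2 * u ≤ (s + 1) * u := Nat.mul_le_mul_right u (by omega)
        set X := (s + 1) * α with hX
        set Y := (s + 1) * u with hY
        omega
      · -- block covers the whole tail, show b + L = m + 1
        have haval' : a = α + q := by omega
        have hLdist : L = (s + 1) * α + (s + 1) * q := by
          rw [hLa, haval']; ring
        have hbLm : b + L = m + 1 := by
          set X := (s + 1) * α with hX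
          set Z := (s + 1) * q with hZ
          set M := (n + 1) * s with hM
          omega
        rw [hBlk, hbLm]
        intro x hx
        rw [Finset.mem_Icc] at hx
        rw [Finset.mem_Ico]
        omega
    · -- wrap case
      have hBlk : S.Blk m i = Finset.Ico b (m + 1) ∪ Finset.Ico 1 (b + L - m) :=
        cblock_of_wrap m b L hb1.1 (by omega) hLm hw
      rcases le_or_gt b (n + 1) with hbs | hbs
      · rw [hBlk]
        intro x hx
        rw [Finset.mem_Icc] at hx
        rw [Finset.mem_union, Finset.mem_Ico]
        left; omega
      · -- b ≥ n + 2 : contradiction via the long prefix ending at n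
        exfalso
        rw [hBlk, Finset.mem_union, Finset.mem_Ico, Finset.mem_Ico] at hn1B
        have hLlong : m + n + 2 ≤ b + L := by
          rcases hn1B with h | h
          · omega
          · omega
        set t₀ := m + n + 1 - b with ht₀
        have hiv' := hiv i hir t₀ (by omega) (by omega)
        have hpref : cblock m b t₀ = Finset.Ico b (m + 1) ∪ Finset.Ico 1 (n + 1) := by
          rw [cblock_of_wrap m b t₀ hb1.1 (by omega) (by omega) (by omega)]
          have he : b + t₀ - m = n + 1 := by omega
          rw [he]
        have hPdisj : Disjoint (Finset.Ico b (m + 1)) (Finset.Ico 1 (n + 1)) := by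
          rw [Finset.disjoint_left]
          intro x hx hx2
          rw [Finset.mem_Ico] at hx hx2
          omega
        have hPcard : (cblock m b t₀).card = (m + 1 - b) + n := by
          rw [hpref, Finset.card_union_of_disjoint hPdisj, Nat.card_Ico, Nat.card_Ico]
          omega
        have hPA : cblock m b t₀ ∩ At = Finset.Icc b (2 * n - k) ∪ A := by
          rw [hpref]
          ext x
          simp only [Finset.mem_inter, Finset.mem_union, Finset.mem_Ico, hAt, hT,
            Finset.mem_Icc]
          constructor
          · rintro ⟨hx1 | hx1, hx2 | hx2⟩
            · have := hA hx2; rw [Finset.mem_Icc] at this; omega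
            · left; omega
            · right; exact hx2
            · omega
          · rintro (⟨hx1, hx2⟩ | hx1)
            · exact ⟨Or.inl ⟨hx1, by omega⟩, Or.inr ⟨by omega, hx2⟩⟩
            · have := hA hx1; rw [Finset.mem_Icc] at this
              exact ⟨Or.inr ⟨by omega, by omega⟩, Or.inl hx1⟩
        have hPAdisj : Disjoint (Finset.Icc b (2 * n - k)) A := by
          rw [Finset.disjoint_left]
          intro x hx hx2
          have := hA hx2
          rw [Finset.mem_Icc] at hx this
          omega
        set c := 2 * n - k + 1 - b with hc
        have hc1 : 1 ≤ c ∧ c + 1 ≤ q := by omega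
        have hPAcard : (cblock m b t₀ ∩ At).card = c + k := by
          rw [hPA, Finset.card_union_of_disjoint hPAdisj, Nat.card_Icc, hAcard]
        rw [hPcard, hPAcard] at hiv'
        have hiv'' : (m + 1 - b) + n + 1 ≤ (s + 1) * (c + k) := by
          exact_mod_cast hiv'
        -- numeric contradiction
        have hexp : (s + 1) * (c + k) = s * c + c + s * k + k := by ring
        have hMexp : (n + 1) * s = s * k + s * q + s := by rw [hnq]; ring
        have hscq : s * (c + 1) ≤ s * q := Nat.mul_le_mul_left s (by omega)
        have hscq' : s * (c + 1) = s * c + s := by ring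
        set P1 := s * c with hP1
        set P2 := s * k with hP2
        set P3 := s * q with hP3
        set M := (n + 1) * s with hM
        omega
  refine ⟨⟨i, hir, hmain⟩, ?_, ?_⟩
  · -- gaps ⊆ [1, n]
    intro x hx
    rw [CircData.gapsUnion, Finset.mem_biUnion] at hx
    obtain ⟨j, hjr, hxg⟩ := hx
    have hjp : j < S.p := Finset.mem_range.mp hjr
    have hx1m : x ∈ Finset.Icc 1 m := by
      rw [← hpart, Finset.mem_biUnion]
      exact ⟨j, hjr, Finset.mem_union_right _ hxg⟩
    rw [Finset.mem_Icc] at hx1m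
    rw [Finset.mem_Icc]
    refine ⟨hx1m.1, ?_⟩
    by_contra hxn
    push_neg at hxn
    have hxB : x ∈ S.Blk m i := hmain (by rw [Finset.mem_Icc]; omega)
    by_cases hji : j = i
    · subst hji
      exact Finset.disjoint_left.mp (hdisjBG j hjp) hxB hxg
    · exact Finset.disjoint_left.mp (hdisj i hir j hjp (Ne.symm hji))
        (Finset.mem_union_left _ hxB) (Finset.mem_union_right _ hxg)
  · -- fdelta ∩ Icc (n+1) m = T
    have hgsub : S.gapsUnion m ⊆ Finset.Icc 1 n := by
      intro x hx
      rw [CircData.gapsUnion, Finset.mem_biUnion] at hx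
      obtain ⟨j, hjr, hxg⟩ := hx
      have hjp : j < S.p := Finset.mem_range.mp hjr
      have hx1m : x ∈ Finset.Icc 1 m := by
        rw [← hpart, Finset.mem_biUnion]
        exact ⟨j, hjr, Finset.mem_union_right _ hxg⟩
      rw [Finset.mem_Icc] at hx1m
      rw [Finset.mem_Icc]
      refine ⟨hx1m.1, ?_⟩
      by_contra hxn
      push_neg at hxn
      have hxB : x ∈ S.Blk m i := hmain (by rw [Finset.mem_Icc]; omega)
      by_cases hji : j = i
      · subst hji
        exact Finset.disjoint_left.mp (hdisjBG j hjp) hxB hxg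
      · exact Finset.disjoint_left.mp (hdisj i hir j hjp (Ne.symm hji))
          (Finset.mem_union_left _ hxB) (Finset.mem_union_right _ hxg)
    ext x
    rw [fdelta, Finset.mem_inter, Finset.mem_union, Finset.mem_union]
    simp only [hT, Finset.mem_Icc]
    constructor
    · rintro ⟨(hx1 | hx1) | hx1, hx2, hx3⟩
      · have := hA hx1; rw [Finset.mem_Icc] at this; omega
      · exact hx1
      · have := hgsub hx1; rw [Finset.mem_Icc] at this; omega
    · rintro ⟨hx1, hx2⟩
      exact ⟨Or.inl (Or.inr ⟨hx1, hx2⟩), hx1, by omega⟩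
end

section
/- Let d, l, n, s be integers with d ≥ 1, l ≥ 0, d + l ≤ n, and 1 ≤ s ≤ ⌊(n−d−l)/(d+l+1)⌋, and set m = (n+1)s + n. For A ⊆ [n] with |A| = d+l let Ã = A ∪ {n+1, n+2, …, 2n−(d+l)} ⊆ [m]. Then for any two distinct subsets A, A' ⊆ [n] with |A| = |A'| = d+l, the intervals [A, f_{s+1}(Ã) ∩ [n]] and [A', f_{s+1}(Ã') ∩ [n]] are disjoint. -/
namespace TID
open Finset

lemma cpt_add (N x a b : ℕ) : cpt N (cpt N x a) b = cpt N x (a + b) := by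
  unfold cpt
  rw [Nat.add_sub_cancel, Nat.mod_add_mod, add_assoc]

lemma cpt_mem_Icc {N : ℕ} (hN : 0 < N) (x t : ℕ) : cpt N x t ∈ Icc 1 N := by
  have := Nat.mod_lt (x - 1 + t) hN
  simp only [cpt, mem_Icc]; omega

lemma cpt_eq_of_lt {N x t : ℕ} (h1 : 1 ≤ x) (h : x - 1 + t < N) : cpt N x t = x + t := by
  unfold cpt; rw [Nat.mod_eq_of_lt h]; omega

lemma cpt_inj {N x i j : ℕ} (hN : 0 < N) (hi : i < N) (hj : j < N)
    (h : cpt N x i = cpt N x j) : i = j := by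
  have h' : (x - 1 + i) % N = (x - 1 + j) % N := by unfold cpt at h; omega
  have h2 : i ≡ j [MOD N] := Nat.ModEq.add_left_cancel' (x - 1) h'
  have h3 : i % N = j % N := h2
  rwa [Nat.mod_eq_of_lt hi, Nat.mod_eq_of_lt hj] at h3

lemma mem_cblock {N x len z : ℕ} : z ∈ cblock N x len ↔ ∃ t < len, cpt N x t = z := by
  simp [cblock]

lemma cblock_card {N x len : ℕ} (hN : 0 < N) (h : len ≤ N) : (cblock N x len).card = len := by
  rw [cblock, card_image_of_injOn, card_range]
  intro i hi j hj hij
  exact cpt_inj hN (lt_of_lt_of_le (mem_range.mp hi) h) (lt_of_lt_of_le (mem_range.mp hj) h) hij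

lemma cblock_subset_Icc {N : ℕ} (hN : 0 < N) (x len : ℕ) : cblock N x len ⊆ Icc 1 N := by
  intro z hz
  obtain ⟨t, _, rfl⟩ := mem_cblock.mp hz
  exact cpt_mem_Icc hN x t

lemma cblock_mono {N x : ℕ} {a b : ℕ} (h : a ≤ b) : cblock N x a ⊆ cblock N x b :=
  image_subset_image (by simpa using range_subset_range.mpr h)

lemma cblock_full {N x len : ℕ} (hN : 0 < N) (h : N ≤ len) : cblock N x len = Icc 1 N := by
  have h1 : cblock N x N = Icc 1 N := by
    apply Finset.eq_of_subset_of_card_le (cblock_subset_Icc hN x N)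
    rw [cblock_card hN le_rfl, Nat.card_Icc]; omega
  apply Finset.Subset.antisymm (cblock_subset_Icc hN x len)
  rw [← h1]; exact cblock_mono h

lemma cblock_eq_Icc {N x len : ℕ} (h1 : 1 ≤ x) (h : x - 1 + len ≤ N) :
    cblock N x len = Icc x (x + len - 1) := by
  ext z
  simp only [cblock, mem_image, mem_range, mem_Icc]
  constructor
  · rintro ⟨t, ht, rfl⟩
    rw [cpt_eq_of_lt h1 (by omega)]; omega
  · rintro ⟨hz1, hz2⟩
    refine ⟨z - x, by omega, ?_⟩
    rw [cpt_eq_of_lt h1 (by omega)]; omega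

lemma cblock_append (N x a b : ℕ) :
    cblock N x (a + b) = cblock N x a ∪ cblock N (cpt N x a) b := by
  ext z
  simp only [cblock, mem_union, mem_image, mem_range]
  constructor
  · rintro ⟨t, ht, rfl⟩
    by_cases hta : t < a
    · exact Or.inl ⟨t, hta, rfl⟩
    · refine Or.inr ⟨t - a, by omega, ?_⟩
      rw [cpt_add]; congr 1; omega
  · rintro (⟨t, ht, rfl⟩ | ⟨t, ht, rfl⟩)
    · exact ⟨t, by omega, rfl⟩
    · exact ⟨a + t, by omega, (cpt_add N x a t).symm⟩

lemma cpt_zero {N x : ℕ} (h1 : 1 ≤ x) (h2 : x ≤ N) : cpt N x 0 = x := by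
  unfold cpt; rw [Nat.mod_eq_of_lt (by omega)]; omega

lemma cpt_mod {N : ℕ} (x a : ℕ) : cpt N x (a % N) = cpt N x a := by
  unfold cpt
  congr 1
  conv_lhs => rw [Nat.add_mod, Nat.mod_mod]
  rw [← Nat.add_mod]

lemma gaps_key (s n k m : ℕ) (hs : 1 ≤ s) (hkn : k ≤ n) (hn : 1 ≤ n)
    (hm : m = (n + 1) * s + n)
    (A : Finset ℕ) (hA : A ⊆ Finset.Icc 1 n) (hAcard : A.card = k)
    (S : CircData)
    (hS : IsBlockStructure m (A ∪ Finset.Icc (n + 1) (2 * n - k)) ((s : ℝ) + 1) S) :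
    ∀ z ∈ S.gapsUnion m, ∀ y ℓ : ℕ, 1 ≤ y → y ≤ m → 1 ≤ ℓ → ℓ ≤ m →
      cpt m y (ℓ - 1) = z →
      (s + 1) * ((cblock m y ℓ ∩ (A ∪ Finset.Icc (n + 1) (2 * n - k))).card) + 1 ≤ ℓ := by
  classical
  set At := A ∪ Finset.Icc (n + 1) (2 * n - k) with hAtdef
  obtain ⟨hp, hBpos, hcons, hwrap, hpart, hdisj2, hdisjBG, hbA, hgapA, hiii, hiv⟩ := hS
  have hm0 : 0 < m := by
    have : 1 * 1 ≤ (n + 1) * s := Nat.mul_le_mul (by omega) hs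
    omega
  have hnm : n ≤ m := by omega
  have h2nk : 2 * n - k ≤ m := by
    have : 1 * 1 ≤ (n + 1) * s := Nat.mul_le_mul (by omega) hs
    have h2 : n + 1 ≤ (n + 1) * s := le_trans (by omega) (Nat.le_mul_of_pos_right (n+1) hs)
    omega
  have hAt_sub : At ⊆ Finset.Icc 1 m := by
    intro z hz
    rcases Finset.mem_union.mp hz with h | h
    · have := hA h; simp only [Finset.mem_Icc] at this ⊢; omega
    · simp only [Finset.mem_Icc] at h ⊢; omega
  have hQdisj : Disjoint A (Finset.Icc (n + 1) (2 * n - k)) := by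
    rw [Finset.disjoint_left]
    intro z hz hz2
    have := hA hz
    simp only [Finset.mem_Icc] at this hz2; omega
  have hAt_card : At.card = n := by
    rw [hAtdef, Finset.card_union_of_disjoint hQdisj, hAcard, Nat.card_Icc]; omega
  -- lengths are at most m
  have hblen : ∀ i, i < S.p → S.lenB i ≤ m := by
    intro i hi
    by_contra hgt
    push_neg at hgt
    have hfull : S.Blk m i = Finset.Icc 1 m := cblock_full hm0 (le_of_lt hgt)
    have h3 := (hiii i hi).2
    rw [hfull] at h3
    rw [Finset.inter_eq_left.mpr hAt_sub, hAt_card, Nat.card_Icc] at h3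
    have h4 : (m : ℝ) ≤ ((s : ℝ) + 1) * n := by push_cast at h3; linarith
    have h5 : m ≤ (s + 1) * n := by exact_mod_cast h4
    have e1 : (s + 1) * n = n * s + n := by ring
    have e2 : (n + 1) * s = n * s + s := by ring
    omega
  have hglen : ∀ i, i < S.p → S.lenG i ≤ m := by
    intro i hi
    by_contra hgt
    push_neg at hgt
    have hfull : S.Gap m i = Finset.Icc 1 m := cblock_full hm0 (le_of_lt hgt)
    have hb0 : S.b 0 ∈ At := hbA 0 hp
    exact hgapA i hi (S.b 0) (hfull ▸ hAt_sub hb0) hb0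
  have hcardBG : ∀ i, i < S.p → (S.Blk m i ∪ S.Gap m i).card = S.lenB i + S.lenG i := by
    intro i hi
    rw [Finset.card_union_of_disjoint (hdisjBG i hi), CircData.Blk, CircData.Gap,
      cblock_card hm0 (hblen i hi), cblock_card hm0 (hglen i hi)]
  -- offsets
  set o : ℕ → ℕ := fun i => ∑ j ∈ Finset.range i, (S.lenB j + S.lenG j) with ho
  have ho_succ : ∀ i, o (i + 1) = o i + S.lenB i + S.lenG i := by
    intro i; simp only [ho, Finset.sum_range_succ]; ring
  have ho_mono : Monotone o := by
    intro i j hij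
    exact Finset.sum_le_sum_of_subset (by simpa using Finset.range_subset_range.mpr hij)
  have hop : o S.p = m := by
    have h1 : ((Finset.range S.p).biUnion (fun i => S.Blk m i ∪ S.Gap m i)).card
        = Finset.card (Finset.Icc 1 m) := by rw [hpart]
    rw [Finset.card_biUnion] at h1
    · rw [Nat.card_Icc] at h1
      simp only [ho]
      have h2 : ∑ j ∈ Finset.range S.p, (S.lenB j + S.lenG j)
          = ∑ j ∈ Finset.range S.p, (S.Blk m j ∪ S.Gap m j).card :=
        Finset.sum_congr rfl (fun i hi => (hcardBG i (Finset.mem_range.mp hi)).symm)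
      omega
    · intro i hi j hj hij
      exact hdisj2 i (Finset.mem_range.mp hi) j (Finset.mem_range.mp hj) hij
  have ho_le : ∀ i, i ≤ S.p → o i ≤ m := by
    intro i hi; rw [← hop]; exact ho_mono hi
  -- θ parametrization
  set θ : ℕ → ℕ := fun j => cpt m (S.b 0) j with hθ
  have hθ_inj : ∀ {i j : ℕ}, i < m → j < m → θ i = θ j → i = j := by
    intro i j hi hj h; exact cpt_inj hm0 hi hj h
  have hb0mem : S.b 0 ∈ Finset.Icc 1 m := hAt_sub (hbA 0 hp)
  have hbo : ∀ i, i < S.p → S.b i = θ (o i) := by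
    intro i
    induction i with
    | zero =>
      intro _
      simp only [hθ, ho, Finset.range_zero, Finset.sum_empty]
      rw [cpt_zero (Finset.mem_Icc.mp hb0mem).1 (Finset.mem_Icc.mp hb0mem).2]
    | succ i ih =>
      intro h
      rw [hcons i h, ih (by omega), hθ, cpt_add, ho_succ, add_assoc]
  have hBlk_eq : ∀ i, i < S.p → S.Blk m i = cblock m (θ (o i)) (S.lenB i) := by
    intro i hi; rw [CircData.Blk, hbo i hi]
  have hGap_eq : ∀ i, i < S.p → S.Gap m i = cblock m (θ (o i + S.lenB i)) (S.lenG i) := by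
    intro i hi
    rw [CircData.Gap, hbo i hi]
    congr 1
    exact cpt_add m (S.b 0) (o i) (S.lenB i)
  set cnt : ℕ → ℕ → ℕ :=
    fun u len => ((Finset.range len).filter (fun t => θ (u + t) ∈ At)).card with hcnt
  have himg : ∀ u len, cblock m (θ u) len = (Finset.range len).image (fun t => θ (u + t)) := by
    intro u len
    rw [cblock]
    apply Finset.image_congr
    intro t _
    simp only [hθ]
    exact cpt_add m (S.b 0) u t
  have hwin_card : ∀ u len, u + len ≤ m →
      (cblock m (θ u) len ∩ At).card = cnt u len := by
    intro u len hul
    rw [himg]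
    have h2 : (Finset.range len).image (fun t => θ (u + t)) ∩ At
        = ((Finset.range len).filter (fun t => θ (u + t) ∈ At)).image (fun t => θ (u + t)) := by
      ext z
      simp only [Finset.mem_inter, Finset.mem_image, Finset.mem_filter, Finset.mem_range]
      constructor
      · rintro ⟨⟨t, ht, rfl⟩, hz⟩; exact ⟨t, ⟨ht, hz⟩, rfl⟩
      · rintro ⟨t, ⟨ht, hz⟩, rfl⟩; exact ⟨⟨t, ht, rfl⟩, hz⟩
    rw [h2, hcnt]
    apply Finset.card_image_of_injOn
    intro t1 h1 t2 h2 he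
    have ht1 := (Finset.mem_filter.mp h1).1
    have ht2 := (Finset.mem_filter.mp h2).1
    rw [Finset.mem_range] at ht1 ht2
    have := hθ_inj (by omega) (by omega) he
    omega
  -- the walk
  set Ψ : ℕ → ℤ :=
    fun e => ∑ j ∈ Finset.range e, (if θ j ∈ At then (s : ℤ) else -1) with hΨ
  have hΨwin : ∀ u len, Ψ (u + len) = Ψ u + ((s : ℤ) + 1) * (cnt u len : ℤ) - len := by
    intro u len
    have h1 : Ψ (u + len) = Ψ u + ∑ t ∈ Finset.range len,
        (if θ (u + t) ∈ At then (s : ℤ) else -1) := by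
      simp only [hΨ]
      rw [Finset.sum_range_add]
    rw [h1]
    rw [Finset.sum_ite, Finset.sum_const, Finset.sum_const]
    have hc := Finset.card_filter_add_card_filter_not
      (s := Finset.range len) (p := fun t => θ (u + t) ∈ At)
    rw [Finset.card_range] at hc
    simp only [hcnt, nsmul_eq_mul, mul_neg, mul_one]
    set c1 := ((Finset.range len).filter (fun t => θ (u + t) ∈ At)).card
    set c2 := ((Finset.range len).filter (fun t => ¬ θ (u + t) ∈ At)).card
    have hcast : (c1 : ℤ) + (c2 : ℤ) = (len : ℤ) := by exact_mod_cast hc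
    have : ((s : ℤ) + 1) * (c1 : ℤ) = (c1 : ℤ) * (s : ℤ) + c1 := by ring
    linarith
  -- axioms in index form
  have hBlkcnt : ∀ i, i < S.p → (At ∩ S.Blk m i).card = cnt (o i) (S.lenB i) := by
    intro i hi
    rw [Finset.inter_comm, hBlk_eq i hi, hwin_card]
    have := ho_succ i
    have := ho_le (i + 1) (by omega)
    omega
  have hiiiZ : ∀ i, i < S.p → S.lenB i = (s + 1) * cnt (o i) (S.lenB i) := by
    intro i hi
    have h3 := hiii i hi
    rw [hBlkcnt i hi] at h3
    have hBc : (S.Blk m i).card = S.lenB i := by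
      rw [CircData.Blk, cblock_card hm0 (hblen i hi)]
    rw [hBc] at h3
    obtain ⟨h4, h5⟩ := h3
    have h6 : (S.lenB i : ℝ) ≤ (((s + 1) * cnt (o i) (S.lenB i) : ℕ) : ℝ) := by
      push_cast; linarith
    have h7 : (((s + 1) * cnt (o i) (S.lenB i) : ℕ) : ℝ) < (S.lenB i : ℝ) + 1 := by
      push_cast; linarith
    have h8 := Nat.cast_le (α := ℝ) |>.mp h6
    have h9 : (s + 1) * cnt (o i) (S.lenB i) < S.lenB i + 1 := by exact_mod_cast h7
    omega
  have hivZ : ∀ i, i < S.p → ∀ t, 0 < t → t < S.lenB i →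
      t + 1 ≤ (s + 1) * cnt (o i) t := by
    intro i hi t ht1 ht2
    have h3 := hiv i hi t ht1 ht2
    have hbeq : cblock m (S.b i) t = cblock m (θ (o i)) t := by rw [hbo i hi]
    rw [hbeq] at h3
    have hcc : (cblock m (θ (o i)) t).card = t :=
      cblock_card hm0 (by have := hblen i hi; omega)
    have hwc : (cblock m (θ (o i)) t ∩ At).card = cnt (o i) t := by
      rw [hwin_card]
      have := ho_succ i
      have := ho_le (i + 1) (by omega)
      omega
    rw [hcc, hwc] at h3
    have h6 : ((t + 1 : ℕ) : ℝ) ≤ (((s + 1) * cnt (o i) t : ℕ) : ℝ) := by push_cast; linarith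
    exact_mod_cast h6
  have hgapθ : ∀ i, i < S.p → ∀ t, t < S.lenG i → θ (o i + S.lenB i + t) ∉ At := by
    intro i hi t ht
    apply hgapA i hi
    rw [hGap_eq i hi, mem_cblock]
    refine ⟨t, ht, ?_⟩
    simp only [hθ]
    rw [cpt_add]
  have hgcnt : ∀ i, i < S.p → ∀ g, g ≤ S.lenG i → cnt (o i + S.lenB i) g = 0 := by
    intro i hi g hg
    simp only [hcnt, Finset.card_eq_zero]
    rw [Finset.filter_eq_empty_iff]
    intro t ht
    rw [Finset.mem_range] at ht
    have h2 := hgapθ i hi t (by omega)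
    rw [add_assoc] at h2 ⊢
    exact h2
  -- gap lengths cumulative
  set Γ : ℕ → ℕ := fun i => ∑ j ∈ Finset.range i, S.lenG j with hΓ
  have hΓsucc : ∀ i, Γ (i + 1) = Γ i + S.lenG i := by
    intro i; simp only [hΓ, Finset.sum_range_succ]
  have hΓmono : Monotone Γ := by
    intro i j hij
    exact Finset.sum_le_sum_of_subset (by simpa using Finset.range_subset_range.mpr hij)
  have hΨBend : ∀ i, i < S.p → Ψ (o i + S.lenB i) = Ψ (o i) := by
    intro i hi
    rw [hΨwin]
    have h1 := hiiiZ i hi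
    have h2 : (S.lenB i : ℤ) = (((s + 1) * cnt (o i) (S.lenB i) : ℕ) : ℤ) := by
      exact_mod_cast h1
    push_cast at h2
    linarith
  have hΨo : ∀ i, i ≤ S.p → Ψ (o i) = -(Γ i : ℤ) := by
    intro i
    induction i with
    | zero => intro _; simp [hΨ, hΓ, ho]
    | succ i ih =>
      intro h
      have hi : i < S.p := by omega
      have e : o (i + 1) = (o i + S.lenB i) + S.lenG i := by rw [ho_succ]
      rw [e, hΨwin, hgcnt i hi _ le_rfl, hΨBend i hi, ih (by omega), hΓsucc]
      push_cast; ring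
  have hΨblk : ∀ i, i < S.p → ∀ t, t ≤ S.lenB i → -(Γ i : ℤ) ≤ Ψ (o i + t) := by
    intro i hi t ht
    rw [hΨwin, hΨo i (le_of_lt hi)]
    by_cases h0 : t = 0
    · subst h0
      have : cnt (o i) 0 = 0 := by simp [hcnt]
      rw [this]; push_cast; linarith
    · by_cases hL : t = S.lenB i
      · subst hL
        have h1 := hiiiZ i hi
        have h2 : (S.lenB i : ℤ) = (((s + 1) * cnt (o i) (S.lenB i) : ℕ) : ℤ) := by
          exact_mod_cast h1
        push_cast at h2
        linarith
      · have h1 := hivZ i hi t (by omega) (by omega)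
        have h2 : ((t + 1 : ℕ) : ℤ) ≤ (((s + 1) * cnt (o i) t : ℕ) : ℤ) := by
          exact_mod_cast h1
        push_cast at h2
        linarith
  have hΨgapval : ∀ i, i < S.p → ∀ g, g ≤ S.lenG i →
      Ψ (o i + S.lenB i + g) = -(Γ i : ℤ) - g := by
    intro i hi g hg
    rw [hΨwin (o i + S.lenB i) g, hgcnt i hi g hg, hΨBend i hi, hΨo i (le_of_lt hi)]
    push_cast; ring
  -- total gap length is s
  have hAt_bi : At = (Finset.range S.p).biUnion (fun i => At ∩ S.Blk m i) := by
    ext z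
    constructor
    · intro hz
      have hz2 : z ∈ Finset.Icc 1 m := hAt_sub hz
      rw [← hpart] at hz2
      obtain ⟨i, hi, hzi⟩ := Finset.mem_biUnion.mp hz2
      rw [Finset.mem_range] at hi
      rcases Finset.mem_union.mp hzi with hb | hg
      · exact Finset.mem_biUnion.mpr ⟨i, Finset.mem_range.mpr hi, Finset.mem_inter.mpr ⟨hz, hb⟩⟩
      · exact absurd hz (hgapA i hi z hg)
    · intro hz
      obtain ⟨i, hi, hzi⟩ := Finset.mem_biUnion.mp hz
      exact (Finset.mem_inter.mp hzi).1
  have hcntsum : ∑ i ∈ Finset.range S.p, cnt (o i) (S.lenB i) = n := by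
    have h1 : At.card = ∑ i ∈ Finset.range S.p, (At ∩ S.Blk m i).card := by
      conv_lhs => rw [hAt_bi]
      apply Finset.card_biUnion
      intro i hi j hj hij
      exact Disjoint.mono
        (Finset.inter_subset_right.trans Finset.subset_union_left)
        (Finset.inter_subset_right.trans Finset.subset_union_left)
        (hdisj2 i (Finset.mem_range.mp hi) j (Finset.mem_range.mp hj) hij)
    rw [hAt_card] at h1
    rw [h1]
    exact Finset.sum_congr rfl (fun i hi => (hBlkcnt i (Finset.mem_range.mp hi)).symm)
  have hSB : ∑ i ∈ Finset.range S.p, S.lenB i = (s + 1) * n := by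
    rw [← hcntsum, Finset.mul_sum]
    exact Finset.sum_congr rfl (fun i hi => hiiiZ i (Finset.mem_range.mp hi))
  have hΓp : Γ S.p = s := by
    have h1 : o S.p = ∑ i ∈ Finset.range S.p, S.lenB i + Γ S.p := by
      simp only [ho, hΓ, ← Finset.sum_add_distrib]
    rw [hop, hSB] at h1
    have h2 : (s + 1) * n + s = m := by rw [hm]; ring
    have h3 : (s + 1) * n + s = (s + 1) * n + Γ S.p := by rw [h2, h1]
    exact (Nat.add_left_cancel h3).symm
  -- locate a position
  have hloc : ∀ j, j < m → ∃ i, i < S.p ∧ o i ≤ j ∧ j < o (i + 1) := by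
    have aux : ∀ K, ∀ j, j < o K → ∃ i, i < K ∧ o i ≤ j ∧ j < o (i + 1) := by
      intro K
      induction K with
      | zero => intro j hj; simp only [ho, Finset.range_zero, Finset.sum_empty] at hj; omega
      | succ K ih =>
        intro j hj
        by_cases hK : j < o K
        · obtain ⟨i, h1, h2, h3⟩ := ih j hK; exact ⟨i, by omega, h2, h3⟩
        · exact ⟨K, by omega, by omega, hj⟩
    intro j hj
    exact aux S.p j (by rwa [hop])
  have hΨlocLow : ∀ i, i < S.p → ∀ j, o i ≤ j → j < o (i + 1) → -(Γ (i + 1) : ℤ) ≤ Ψ j := by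
    intro i hi j h1 h2
    have hsucc := ho_succ i
    have hGle : (Γ i : ℤ) ≤ (Γ (i + 1) : ℤ) := by exact_mod_cast hΓmono (by omega : i ≤ i + 1)
    by_cases hb : j ≤ o i + S.lenB i
    · have hA1 := hΨblk i hi (j - o i) (by omega)
      rw [show o i + (j - o i) = j from by omega] at hA1
      linarith
    · have hgle : j - o i - S.lenB i ≤ S.lenG i := by omega
      have hA1 := hΨgapval i hi (j - o i - S.lenB i) hgle
      rw [show o i + S.lenB i + (j - o i - S.lenB i) = j from by omega] at hA1
      rw [hA1, hΓsucc]
      have : ((j - o i - S.lenB i : ℕ) : ℤ) ≤ (S.lenG i : ℤ) := by exact_mod_cast hgle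
      push_cast
      linarith
  have hΨm : Ψ m = -(s : ℤ) := by
    have h1 := hΨo S.p le_rfl
    rw [hop] at h1
    rw [h1, hΓp]
  have hΨlow : ∀ j, j ≤ m → -(s : ℤ) ≤ Ψ j := by
    intro j hj
    rcases eq_or_lt_of_le hj with h | h
    · rw [h, hΨm]
    · obtain ⟨i, hi, h1, h2⟩ := hloc j h
      have hA1 := hΨlocLow i hi j h1 h2
      have : (Γ (i + 1) : ℤ) ≤ (Γ S.p : ℤ) := by exact_mod_cast hΓmono (by omega : i + 1 ≤ S.p)
      rw [← hΓp]
      linarith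
  -- locate a gap element
  have hgloc : ∀ e, e < m → θ e ∈ S.gapsUnion m →
      ∃ i, i < S.p ∧ ∃ g, g < S.lenG i ∧ e = o i + S.lenB i + g := by
    intro e he hge
    obtain ⟨i, hi, hmem⟩ := Finset.mem_biUnion.mp hge
    rw [Finset.mem_range] at hi
    rw [hGap_eq i hi, mem_cblock] at hmem
    obtain ⟨g, hg, heq⟩ := hmem
    have heq2 : θ (o i + S.lenB i + g) = θ e := by
      simp only [hθ] at heq ⊢
      rw [← cpt_add]
      exact heq
    have hlt : o i + S.lenB i + g < m := by
      have := ho_succ i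
      have := ho_le (i + 1) (by omega)
      omega
    exact ⟨i, hi, g, hg, (hθ_inj hlt he heq2).symm⟩
  -- the main arc inequality
  intro z hz y ℓ hy1 hym hl1 hlm harc
  obtain ⟨j0, hj0, hj0e⟩ : ∃ j < m, cpt m (S.b 0) j = y := by
    have hyI : y ∈ Finset.Icc 1 m := Finset.mem_Icc.mpr ⟨hy1, hym⟩
    rw [← cblock_full (x := S.b 0) hm0 (le_refl m)] at hyI
    exact mem_cblock.mp hyI
  have hj0θ : θ j0 = y := hj0e
  have hz_eq : z = θ (j0 + (ℓ - 1)) := by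
    rw [← harc, ← hj0θ]
    simp only [hθ]
    rw [cpt_add]
  by_cases hcase : j0 + ℓ ≤ m
  · -- no wrap
    have hem : j0 + ℓ - 1 < m := by omega
    have hzθ : θ (j0 + ℓ - 1) ∈ S.gapsUnion m := by
      rw [show j0 + ℓ - 1 = j0 + (ℓ - 1) from by omega, ← hz_eq]
      exact hz
    obtain ⟨i, hi, g, hg, hloce⟩ := hgloc (j0 + ℓ - 1) hem hzθ
    have hccard : (cblock m y ℓ ∩ At).card = cnt j0 ℓ := by
      rw [← hj0θ]
      exact hwin_card j0 ℓ hcase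
    have hΨe : Ψ (j0 + ℓ) = -(Γ i : ℤ) - ((g : ℤ) + 1) := by
      rw [show j0 + ℓ = o i + S.lenB i + (g + 1) from by omega,
        hΨgapval i hi (g + 1) (by omega)]
      push_cast; ring
    have hsucci := ho_succ i
    have hpre : Ψ (j0 + ℓ) ≤ Ψ j0 - 1 := by
      obtain ⟨i', hi', h1', h2'⟩ := hloc j0 hj0
      have hi'le : i' ≤ i := by
        by_contra hgt
        push_neg at hgt
        have := ho_mono (show i + 1 ≤ i' from by omega)
        omega
      have hgnn : (0 : ℤ) ≤ (g : ℤ) := Int.natCast_nonneg g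
      rcases lt_or_eq_of_le hi'le with hlt | heqi
      · have hA1 := hΨlocLow i' hi' j0 h1' h2'
        have hA2 : (Γ (i' + 1) : ℤ) ≤ (Γ i : ℤ) := by
          exact_mod_cast hΓmono (by omega : i' + 1 ≤ i)
        rw [hΨe]
        linarith
      · subst heqi
        by_cases hjb : j0 ≤ o i' + S.lenB i'
        · have hA1 := hΨblk i' hi' (j0 - o i') (by omega)
          rw [show o i' + (j0 - o i') = j0 from by omega] at hA1
          rw [hΨe]
          linarith
        · have hgle : j0 - o i' - S.lenB i' ≤ S.lenG i' := by omega
          have hA1 := hΨgapval i' hi' (j0 - o i' - S.lenB i') hgle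
          rw [show o i' + S.lenB i' + (j0 - o i' - S.lenB i') = j0 from by omega] at hA1
          rw [hΨe, hA1]
          have hg'le : j0 - o i' - S.lenB i' ≤ g := by omega
          have : ((j0 - o i' - S.lenB i' : ℕ) : ℤ) ≤ (g : ℤ) := by exact_mod_cast hg'le
          linarith
    have hwin2 := hΨwin j0 ℓ
    rw [hccard]
    have hfin : ((s : ℤ) + 1) * (cnt j0 ℓ : ℤ) + 1 ≤ (ℓ : ℤ) := by linarith
    exact_mod_cast hfin
  · -- wrap-around
    push_neg at hcase
    have hem : j0 + ℓ - 1 - m < m := by omega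
    have hmod : (j0 + (ℓ - 1)) % m = j0 + ℓ - 1 - m := by
      rw [Nat.mod_eq_sub_mod (by omega), Nat.mod_eq_of_lt (by omega)]
      omega
    have hzθ : θ (j0 + ℓ - 1 - m) ∈ S.gapsUnion m := by
      have hper : θ (j0 + ℓ - 1 - m) = θ (j0 + (ℓ - 1)) := by
        simp only [hθ]
        rw [← hmod, cpt_mod]
      rw [hper, ← hz_eq]
      exact hz
    obtain ⟨i, hi, g, hg, hloce⟩ := hgloc (j0 + ℓ - 1 - m) hem hzθ
    set q : ℕ := j0 + ℓ - m with hqdef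
    have hsplit : cblock m y ℓ
        = cblock m (θ j0) (m - j0) ∪ cblock m (θ 0) q := by
      rw [← hj0θ, show ℓ = (m - j0) + q from by omega, cblock_append]
      have h00 : cpt m (S.b 0) m = cpt m (S.b 0) 0 := by
        conv_lhs => rw [← cpt_mod (N := m) (S.b 0) m]
        rw [Nat.mod_self]
      have hbase : cpt m (θ j0) (m - j0) = θ 0 := by
        simp only [hθ]
        rw [cpt_add, show j0 + (m - j0) = m from by omega, h00]
      rw [hbase]
    have hdisjp : Disjoint (cblock m (θ j0) (m - j0)) (cblock m (θ 0) q) := by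
      rw [Finset.disjoint_left]
      intro a ha hb
      obtain ⟨t1, ht1, he1⟩ := mem_cblock.mp ha
      obtain ⟨t2, ht2, he2⟩ := mem_cblock.mp hb
      have hA : θ (j0 + t1) = a := by
        simp only [hθ] at he1 ⊢
        rw [← cpt_add]
        exact he1
      have hB : θ (0 + t2) = a := by
        simp only [hθ] at he2 ⊢
        rw [← cpt_add]
        exact he2
      have := hθ_inj (show j0 + t1 < m from by omega) (show 0 + t2 < m from by omega)
        (hA.trans hB.symm)
      omega
    have hcard2 : (cblock m y ℓ ∩ At).card = cnt j0 (m - j0) + cnt 0 q := by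
      rw [hsplit, Finset.union_inter_distrib_right,
        Finset.card_union_of_disjoint
          (Disjoint.mono Finset.inter_subset_left Finset.inter_subset_left hdisjp),
        hwin_card j0 (m - j0) (by omega), hwin_card 0 q (by omega)]
    have hw1 := hΨwin j0 (m - j0)
    rw [show j0 + (m - j0) = m from by omega, hΨm] at hw1
    have hw2 := hΨwin 0 q
    rw [zero_add] at hw2
    have hΨ0 : Ψ 0 = 0 := by simp [hΨ]
    rw [hΨ0] at hw2
    have hΨe : Ψ q = -(Γ i : ℤ) - ((g : ℤ) + 1) := by
      rw [show q = o i + S.lenB i + g + 1 from by omega]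
      rw [show o i + S.lenB i + g + 1 = o i + S.lenB i + (g + 1) from by omega,
        hΨgapval i hi (g + 1) (by omega)]
      push_cast; ring
    have hΨelow : Ψ q ≤ -1 := by
      rw [hΨe]
      have h1 : (0 : ℤ) ≤ (Γ i : ℤ) := Int.natCast_nonneg _
      have h2 : (0 : ℤ) ≤ (g : ℤ) := Int.natCast_nonneg _
      linarith
    have hj0low := hΨlow j0 (by omega)
    rw [hcard2]
    have hre : ((m - j0 : ℕ) : ℤ) + (q : ℤ) = (ℓ : ℤ) := by
      have : (m - j0) + q = ℓ := by omega
      exact_mod_cast this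
    have hexp : ((s : ℤ) + 1) * (((cnt j0 (m - j0) : ℕ) : ℤ) + ((cnt 0 q : ℕ) : ℤ))
        = ((s : ℤ) + 1) * (cnt j0 (m - j0) : ℤ) + ((s : ℤ) + 1) * (cnt 0 q : ℤ) := by
      ring
    have hfin : ((s : ℤ) + 1) * (((cnt j0 (m - j0) : ℕ) : ℤ) + ((cnt 0 q : ℕ) : ℤ)) + 1
        ≤ (ℓ : ℤ) := by linarith
    have hfin2 : (s + 1) * (cnt j0 (m - j0) + cnt 0 q) + 1 ≤ ℓ := by
      exact_mod_cast hfin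
    exact hfin2

lemma core (s n k m : ℕ) (hs : 1 ≤ s) (hkn : k ≤ n) (hn : 1 ≤ n)
    (hm : m = (n + 1) * s + n)
    (A A' : Finset ℕ) (hA : A ⊆ Finset.Icc 1 n) (hA' : A' ⊆ Finset.Icc 1 n)
    (hAcard : A.card = k) (hA'card : A'.card = k)
    (S S' : CircData)
    (hS : IsBlockStructure m (A ∪ Finset.Icc (n + 1) (2 * n - k)) ((s : ℝ) + 1) S)
    (hS' : IsBlockStructure m (A' ∪ Finset.Icc (n + 1) (2 * n - k)) ((s : ℝ) + 1) S')
    (x x' : ℕ) (hx'1 : 1 ≤ x') (hxn : x ≤ n) (hx'x : x' < x)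
    (hxA : x ∈ A) (hxA' : x ∉ A') (hx'A' : x' ∈ A') (hx'A : x' ∉ A)
    (hmid : ∀ z, x' < z → z < x → (z ∈ A ↔ z ∈ A'))
    (hxgap : x ∈ S'.gapsUnion m) (hx'gap : x' ∈ S.gapsUnion m) : False := by
  classical
  have hnm : n + 1 ≤ m := by
    have : 1 * 1 ≤ (n + 1) * s := Nat.mul_le_mul (by omega) hs
    have h2 : n + 1 ≤ (n + 1) * s := le_trans (by omega) (Nat.le_mul_of_pos_right (n + 1) hs)
    omega
  have h2nk : 2 * n - k ≤ m := by
    have h2 : n + 1 ≤ (n + 1) * s := le_trans (by omega) (Nat.le_mul_of_pos_right (n + 1) hs)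
    omega
  have hAz : ∀ z ∈ A, 1 ≤ z ∧ z ≤ n := fun z hz => Finset.mem_Icc.mp (hA hz)
  -- (d): arc [x', x] for x ∈ gaps S'
  have harc1 : cpt m x' (x - x' + 1 - 1) = x := by
    rw [show x - x' + 1 - 1 = x - x' from by omega, cpt_eq_of_lt hx'1 (by omega)]
    omega
  have hd := gaps_key s n k m hs hkn hn hm A' hA' hA'card S' hS' x hxgap x' (x - x' + 1)
    hx'1 (by omega) (by omega) (by omega) harc1
  have hIcc1 : cblock m x' (x - x' + 1) = Finset.Icc x' x := by
    rw [cblock_eq_Icc hx'1 (by omega), show x' + (x - x' + 1) - 1 = x from by omega]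
  rw [hIcc1] at hd
  have hinter1 : Finset.Icc x' x ∩ (A' ∪ Finset.Icc (n + 1) (2 * n - k))
      = A' ∩ Finset.Icc x' x := by
    ext z
    simp only [Finset.mem_inter, Finset.mem_union, Finset.mem_Icc]
    constructor
    · rintro ⟨⟨h1, h2⟩, h3 | ⟨h4, h5⟩⟩
      · exact ⟨h3, h1, h2⟩
      · omega
    · rintro ⟨h3, h1, h2⟩
      exact ⟨⟨h1, h2⟩, Or.inl h3⟩
  rw [hinter1] at hd
  -- (c): wrap arc [x → x'] for x' ∈ gaps S
  have harc2 : cpt m x (m - x + 1 + x' - 1) = x' := by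
    unfold cpt
    rw [show x - 1 + (m - x + 1 + x' - 1) = m + (x' - 1) from by omega,
      Nat.add_mod_left, Nat.mod_eq_of_lt (by omega)]
    omega
  have hc := gaps_key s n k m hs hkn hn hm A hA hAcard S hS x' hx'gap x (m - x + 1 + x')
    (by omega) (by omega) (by omega) (by omega) harc2
  have hIcc2 : cblock m x (m - x + 1 + x') = Finset.Icc x m ∪ Finset.Icc 1 x' := by
    rw [show m - x + 1 + x' = (m - x + 1) + x' from rfl, cblock_append]
    have hbase : cpt m x (m - x + 1) = 1 := by
      unfold cpt
      rw [show x - 1 + (m - x + 1) = m from by omega, Nat.mod_self]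
    rw [hbase]
    congr 1
    · rw [cblock_eq_Icc (by omega) (by omega), show x + (m - x + 1) - 1 = m from by omega]
    · rw [cblock_eq_Icc (le_refl 1) (by omega), show 1 + x' - 1 = x' from by omega]
  rw [hIcc2] at hc
  have hinter2 : (Finset.Icc x m ∪ Finset.Icc 1 x') ∩ (A ∪ Finset.Icc (n + 1) (2 * n - k))
      = (A ∩ Finset.Icc 1 x') ∪ ((A ∩ Finset.Icc x n) ∪ Finset.Icc (n + 1) (2 * n - k)) := by
    ext z
    simp only [Finset.mem_inter, Finset.mem_union, Finset.mem_Icc]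
    constructor
    · rintro ⟨hz1 | hz1, hz2 | hz2⟩
      · exact Or.inr (Or.inl ⟨hz2, hz1.1, (hAz z hz2).2⟩)
      · exact Or.inr (Or.inr hz2)
      · exact Or.inl ⟨hz2, hz1⟩
      · omega
    · rintro (⟨hz2, hz1⟩ | ⟨hz2, hz1⟩ | hz2)
      · exact ⟨Or.inr hz1, Or.inl hz2⟩
      · exact ⟨Or.inl ⟨hz1.1, by omega⟩, Or.inl hz2⟩
      · exact ⟨Or.inl ⟨by omega, by omega⟩, Or.inr hz2⟩
  rw [hinter2] at hc
  -- cardinalities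
  set u := (A ∩ Finset.Icc 1 x').card with hu
  set v := (A ∩ Finset.Icc x n).card with hv
  set mid := (A ∩ Finset.Ioo x' x).card with hmidc
  have hdisj_uv : Disjoint (A ∩ Finset.Icc 1 x') ((A ∩ Finset.Icc x n) ∪ Finset.Icc (n + 1) (2 * n - k)) := by
    rw [Finset.disjoint_left]
    intro z hz1 hz2
    simp only [Finset.mem_inter, Finset.mem_union, Finset.mem_Icc] at hz1 hz2
    rcases hz2 with ⟨_, h⟩ | h <;> omega
  have hdisj_vq : Disjoint (A ∩ Finset.Icc x n) (Finset.Icc (n + 1) (2 * n - k)) := by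
    rw [Finset.disjoint_left]
    intro z hz1 hz2
    simp only [Finset.mem_inter, Finset.mem_Icc] at hz1 hz2
    omega
  have hcards : ((A ∩ Finset.Icc 1 x') ∪ ((A ∩ Finset.Icc x n) ∪ Finset.Icc (n + 1) (2 * n - k))).card
      = u + (v + (n - k)) := by
    rw [Finset.card_union_of_disjoint hdisj_uv, Finset.card_union_of_disjoint hdisj_vq,
      Nat.card_Icc]
    congr 2
    omega
  rw [hcards] at hc
  -- partition of A
  have hApart : u + mid + v = k := by
    have hsplit : A = (A ∩ Finset.Icc 1 x') ∪ ((A ∩ Finset.Ioo x' x) ∪ (A ∩ Finset.Icc x n)) := by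
      ext z
      simp only [Finset.mem_inter, Finset.mem_union, Finset.mem_Icc, Finset.mem_Ioo]
      constructor
      · intro hz
        have hb := hAz z hz
        by_cases h1 : z ≤ x'
        · exact Or.inl ⟨hz, by omega, h1⟩
        · by_cases h2 : z < x
          · exact Or.inr (Or.inl ⟨hz, by omega, h2⟩)
          · exact Or.inr (Or.inr ⟨hz, by omega, hb.2⟩)
      · rintro (⟨hz, _⟩ | ⟨hz, _⟩ | ⟨hz, _⟩) <;> exact hz
    have hd1 : Disjoint (A ∩ Finset.Icc 1 x') ((A ∩ Finset.Ioo x' x) ∪ (A ∩ Finset.Icc x n)) := by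
      rw [Finset.disjoint_left]
      intro z hz1 hz2
      simp only [Finset.mem_inter, Finset.mem_union, Finset.mem_Icc, Finset.mem_Ioo] at hz1 hz2
      rcases hz2 with ⟨_, h⟩ | ⟨_, h⟩ <;> omega
    have hd2 : Disjoint (A ∩ Finset.Ioo x' x) (A ∩ Finset.Icc x n) := by
      rw [Finset.disjoint_left]
      intro z hz1 hz2
      simp only [Finset.mem_inter, Finset.mem_Icc, Finset.mem_Ioo] at hz1 hz2
      omega
    have := hAcard
    rw [hsplit, Finset.card_union_of_disjoint hd1, Finset.card_union_of_disjoint hd2] at this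
    omega
  -- w0 = mid + 1
  have hw0set : A' ∩ Finset.Icc x' x = insert x' (A ∩ Finset.Ioo x' x) := by
    ext z
    simp only [Finset.mem_inter, Finset.mem_Icc, Finset.mem_insert, Finset.mem_Ioo]
    constructor
    · rintro ⟨hz1, hz2, hz3⟩
      by_cases hzx' : z = x'
      · exact Or.inl hzx'
      · have hzx : z ≠ x := by rintro rfl; exact hxA' hz1
        refine Or.inr ⟨(hmid z (by omega) (by omega)).mpr hz1, by omega, by omega⟩
    · rintro (rfl | ⟨hz1, hz2, hz3⟩)
      · exact ⟨hx'A', le_refl _, by omega⟩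
      · exact ⟨(hmid z hz2 hz3).mp hz1, by omega, by omega⟩
  have hw0 : (A' ∩ Finset.Icc x' x).card = mid + 1 := by
    rw [hw0set, Finset.card_insert_of_notMem (by
      simp only [Finset.mem_inter, Finset.mem_Ioo]
      rintro ⟨_, h, _⟩
      omega)]
  rw [hw0] at hd
  -- final arithmetic
  have hmid_le : mid ≤ n := by omega
  have he1 : u + (v + (n - k)) = n - mid := by omega
  rw [he1] at hc
  have hmul : (s + 1) * (n - mid) + (s + 1) * (mid + 1) = (s + 1) * (n + 1) := by
    rw [← Nat.mul_add]
    congr 1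
    omega
  have hms : (s + 1) * (n + 1) = (n + 1) * s + (n + 1) := by ring
  have hl1 : m - x + x = m := by omega
  have hl2 : x - x' + x' = x := by omega
  linarith
end TID

/-- part of Proposition 3.3 of the paper. Let `d ≥ 1`, `l ≥ 0`,
`d + l ≤ n`, `1 ≤ s ≤ ⌊(n−d−l)/(d+l+1)⌋` and `m = (n+1)s + n`. For `A ⊆ [n]`
with `|A| = d + l`, let `Ã = A ∪ {n+1, …, 2n−(d+l)} ⊆ [m]`. Then for distinct
`A, A' ⊆ [n]` of cardinality `d + l`, the intervals `[A, f_{s+1}(Ã) ∩ [n]]` and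
`[A', f_{s+1}(Ã') ∩ [n]]` are disjoint. -/
theorem trimmed_intervals_disjoint (d l n s m : ℕ) (hd : 1 ≤ d) (hdl : d + l ≤ n)
    (hs1 : 1 ≤ s) (hs2 : s ≤ (n - d - l) / (d + l + 1))
    (hm : m = (n + 1) * s + n)
    (A A' : Finset ℕ) (hA : A ⊆ Finset.Icc 1 n) (hA' : A' ⊆ Finset.Icc 1 n)
    (hAcard : A.card = d + l) (hA'card : A'.card = d + l) (hne : A ≠ A')
    (S S' : CircData)
    (hS : IsBlockStructure m (A ∪ Finset.Icc (n + 1) (2 * n - (d + l))) ((s : ℝ) + 1) S)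
    (hS' : IsBlockStructure m (A' ∪ Finset.Icc (n + 1) (2 * n - (d + l))) ((s : ℝ) + 1) S') :
    ∀ C : Finset ℕ,
      ¬(A ⊆ C ∧
        C ⊆ fdelta (A ∪ Finset.Icc (n + 1) (2 * n - (d + l))) S m ∩ Finset.Icc 1 n ∧
        A' ⊆ C ∧
        C ⊆ fdelta (A' ∪ Finset.Icc (n + 1) (2 * n - (d + l))) S' m ∩ Finset.Icc 1 n) := by
  intro C
  rintro ⟨h1, h2, h3, h4⟩
  have hn : 1 ≤ n := by omega
  have hDg : ∀ z, z ∈ A → z ∉ A' → z ∈ S'.gapsUnion m := by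
    intro z hz hz'
    have hzC := h1 hz
    obtain ⟨hzf, hzn⟩ := Finset.mem_inter.mp (h4 hzC)
    rw [fdelta, Finset.mem_union] at hzf
    rcases hzf with hzf | hzf
    · rcases Finset.mem_union.mp hzf with h | h
      · exact absurd h hz'
      · have hq := Finset.mem_Icc.mp h
        have hb := Finset.mem_Icc.mp (hA hz)
        omega
    · exact hzf
  have hD'g : ∀ z, z ∈ A' → z ∉ A → z ∈ S.gapsUnion m := by
    intro z hz hz'
    have hzC := h3 hz
    obtain ⟨hzf, hzn⟩ := Finset.mem_inter.mp (h2 hzC)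
    rw [fdelta, Finset.mem_union] at hzf
    rcases hzf with hzf | hzf
    · rcases Finset.mem_union.mp hzf with h | h
      · exact absurd h hz'
      · have hq := Finset.mem_Icc.mp h
        have hb := Finset.mem_Icc.mp (hA' hz)
        omega
    · exact hzf
  have hDne : (A \ A').Nonempty := by
    rw [Finset.sdiff_nonempty]
    intro hsub
    exact hne (Finset.eq_of_subset_of_card_le hsub (by omega))
  have hD'ne : (A' \ A).Nonempty := by
    rw [Finset.sdiff_nonempty]
    intro hsub
    exact hne (Finset.eq_of_subset_of_card_le hsub (by omega)).symm
  have hUne : ((A \ A') ∪ (A' \ A)).Nonempty := by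
    obtain ⟨a, ha⟩ := hDne
    exact ⟨a, Finset.mem_union_left _ ha⟩
  have hvmem := Finset.max'_mem _ hUne
  set v := ((A \ A') ∪ (A' \ A)).max' hUne with hvdef
  rcases Finset.mem_union.mp hvmem with hvD | hvD
  · -- max of symmetric difference lies in A \ A'
    have hx'mem := Finset.max'_mem _ hD'ne
    set x' := (A' \ A).max' hD'ne with hx'def
    obtain ⟨hx'A', hx'A⟩ := Finset.mem_sdiff.mp hx'mem
    have hx'v : x' < v := by
      have hle : x' ≤ v := Finset.le_max' _ x' (Finset.mem_union_right _ hx'mem)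
      have hne2 : x' ≠ v := by
        intro he
        apply hx'A
        rw [he]
        exact (Finset.mem_sdiff.mp hvD).1
      omega
    have hEne : ((A \ A').filter (fun z => x' < z)).Nonempty :=
      ⟨v, Finset.mem_filter.mpr ⟨hvD, hx'v⟩⟩
    have hxmem := Finset.min'_mem _ hEne
    set x := ((A \ A').filter (fun z => x' < z)).min' hEne with hxdef
    rw [Finset.mem_filter] at hxmem
    obtain ⟨hxD, hx'x⟩ := hxmem
    obtain ⟨hxA, hxA'⟩ := Finset.mem_sdiff.mp hxD
    have hx'1 : 1 ≤ x' := (Finset.mem_Icc.mp (hA' hx'A')).1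
    have hxn : x ≤ n := (Finset.mem_Icc.mp (hA hxA)).2
    have hmid : ∀ z, x' < z → z < x → (z ∈ A ↔ z ∈ A') := by
      intro z hz1 hz2
      constructor
      · intro hz
        by_contra hz'
        have hzE : z ∈ (A \ A').filter (fun z => x' < z) :=
          Finset.mem_filter.mpr ⟨Finset.mem_sdiff.mpr ⟨hz, hz'⟩, hz1⟩
        have := Finset.min'_le _ z hzE
        omega
      · intro hz
        by_contra hz'
        have hzD : z ∈ A' \ A := Finset.mem_sdiff.mpr ⟨hz, hz'⟩
        have := Finset.le_max' _ z hzD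
        omega
    exact TID.core s n (d + l) m hs1 hdl hn hm A A' hA hA' hAcard hA'card S S' hS hS'
      x x' hx'1 hxn hx'x hxA hxA' hx'A' hx'A hmid (hDg x hxA hxA') (hD'g x' hx'A' hx'A)
  · -- max of symmetric difference lies in A' \ A : symmetric
    have hx'mem := Finset.max'_mem _ hDne
    set x' := (A \ A').max' hDne with hx'def
    obtain ⟨hx'A, hx'A'⟩ := Finset.mem_sdiff.mp hx'mem
    have hx'v : x' < v := by
      have hle : x' ≤ v := Finset.le_max' _ x' (Finset.mem_union_left _ hx'mem)
      have hne2 : x' ≠ v := by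
        intro he
        apply hx'A'
        rw [he]
        exact (Finset.mem_sdiff.mp hvD).1
      omega
    have hEne : ((A' \ A).filter (fun z => x' < z)).Nonempty :=
      ⟨v, Finset.mem_filter.mpr ⟨hvD, hx'v⟩⟩
    have hxmem := Finset.min'_mem _ hEne
    set x := ((A' \ A).filter (fun z => x' < z)).min' hEne with hxdef
    rw [Finset.mem_filter] at hxmem
    obtain ⟨hxD, hx'x⟩ := hxmem
    obtain ⟨hxA', hxA⟩ := Finset.mem_sdiff.mp hxD
    have hx'1 : 1 ≤ x' := (Finset.mem_Icc.mp (hA hx'A)).1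
    have hxn : x ≤ n := (Finset.mem_Icc.mp (hA' hxA')).2
    have hmid : ∀ z, x' < z → z < x → (z ∈ A' ↔ z ∈ A) := by
      intro z hz1 hz2
      constructor
      · intro hz
        by_contra hz'
        have hzE : z ∈ (A' \ A).filter (fun z => x' < z) :=
          Finset.mem_filter.mpr ⟨Finset.mem_sdiff.mpr ⟨hz, hz'⟩, hz1⟩
        have := Finset.min'_le _ z hzE
        omega
      · intro hz
        by_contra hz'
        have hzD : z ∈ A \ A' := Finset.mem_sdiff.mpr ⟨hz, hz'⟩
        have := Finset.le_max' _ z hzD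
        omega
    exact TID.core s n (d + l) m hs1 hdl hn hm A' A hA' hA hA'card hAcard S' S hS' hS
      x x' hx'1 hxn hx'x hxA' hxA hx'A hx'A' hmid (hD'g x hxA' hxA) (hDg x' hx'A hx'A')
end

section
/- Let d, l, n, s be integers with d ≥ 1, l ≥ 0, d + l ≤ n, and 1 ≤ s ≤ ⌊(n−d−l)/(d+l+1)⌋, and set m = (n+1)s + n. For A ⊆ [n] with |A| = d+l let Ã = A ∪ {n+1, n+2, …, 2n−(d+l)} ⊆ [m], and let 𝓘_{n,d+l,s+1} = { [A, f_{s+1}(Ã) ∩ [n]] : A ⊆ [n], |A| = d+l }. If l' is a positive integer and D ⊆ [n] with |D| = d + l + l' is not covered by any element of 𝓘_{n,d+l,s+1}, then no superset of D in [n] is covered by any element of 𝓘_{n,d+l,s+1}. -/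
/-!
Read the circle `[N]` from a point `x` and let the walk go up by `δ - 1` at each point of `X`
and down by `1` at every other point. A block structure of `X` cuts this walk at its first
returns: a block starts at a point of `X` and is the excursion until the walk first comes back
to its starting level (conditions (iii) and (iv)), and a gap is a run of new minima. Hence the
gaps are exactly the points `y` that end no dense arc, i.e. no clockwise arc `[a, y]` with
`a ∈ X` and `|[a, y]| ≤ δ |X ∩ [a, y]|`; and a block structure exists whenever `δ |X| < N`:
start from a point of `X` after which the walk reaches its minimum only after a full turn, and
cut greedily.

Now let `[A, f(Ã) ∩ [n]]` cover `E ⊇ D`, so that the points of `E \ A` end no dense arc of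
`Ã`. For `e ∈ A \ D`, exchange `e` for the last point `x` of `E \ A` before `e`: seen from `x`
this lifts the walk by `δ` only up to `e`, and the other points of `E \ A` lie beyond `e`, so
they still end no dense arc. Repeating this inside `E \ {e}` moves `A` into `D` (as
`|A| ≤ |D|`), and then `D` is covered by the interval of the new `A`.
-/

open Finset

namespace CircleBlocks

def cwDist (N a z : ℕ) : ℕ := (z + N - a) % N

section Circle

variable {N : ℕ}

lemma cpt_mem (hN : 0 < N) (x t : ℕ) : cpt N x t ∈ Icc 1 N := by
  have := Nat.mod_lt (x - 1 + t) hN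
  simp only [cpt, mem_Icc]; omega

lemma cpt_cpt (x a t : ℕ) : cpt N (cpt N x a) t = cpt N x (a + t) := by
  simp only [cpt, Nat.add_sub_cancel, Nat.mod_add_mod, Nat.add_assoc]

lemma cpt_add_self (x t : ℕ) : cpt N x (t + N) = cpt N x t := by
  simp only [cpt, ← Nat.add_assoc, Nat.add_mod_right]

lemma cpt_zero {x : ℕ} (hx : x ∈ Icc 1 N) : cpt N x 0 = x := by
  rw [mem_Icc] at hx
  simp only [cpt, Nat.add_zero]
  rw [Nat.mod_eq_of_lt (by omega)]; omega

lemma cpt_injOn (x : ℕ) : Set.InjOn (cpt N x) (Set.Iio N) := by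
  intro u hu v hv h
  simp only [cpt, Set.mem_Iio] at h hu hv
  have h' : (x - 1 + u) % N = (x - 1 + v) % N := by omega
  have := Nat.ModEq.add_left_cancel' (x - 1) h'
  rwa [Nat.ModEq, Nat.mod_eq_of_lt hu, Nat.mod_eq_of_lt hv] at this

lemma cwDist_lt (hN : 0 < N) (a z : ℕ) : cwDist N a z < N := Nat.mod_lt _ hN

lemma cwDist_cpt {x : ℕ} (hx : x ∈ Icc 1 N) {t : ℕ} (ht : t < N) :
    cwDist N x (cpt N x t) = t := by
  rw [mem_Icc] at hx
  simp only [cwDist, cpt]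
  rw [show (x - 1 + t) % N + 1 + N - x = (x - 1 + t) % N + (N + 1 - x) by omega, Nat.mod_add_mod,
    show x - 1 + t + (N + 1 - x) = t + N by omega, Nat.add_mod_right, Nat.mod_eq_of_lt ht]

lemma cpt_cwDist {x z : ℕ} (hx : x ∈ Icc 1 N) (hz : z ∈ Icc 1 N) :
    cpt N x (cwDist N x z) = z := by
  rw [mem_Icc] at hx hz
  simp only [cpt, cwDist]
  rw [Nat.add_mod_mod, show x - 1 + (z + N - x) = z - 1 + N by omega, Nat.add_mod_right,
    Nat.mod_eq_of_lt (by omega)]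
  omega

lemma cwDist_cpt_cpt (x : ℕ) {α β : ℕ} (hα : α < N) (hβ : β < N) :
    cwDist N (cpt N x α) (cpt N x β) = if α ≤ β then β - α else β + N - α := by
  have hN : 0 < N := by omega
  split_ifs with h
  · rw [show cpt N x β = cpt N (cpt N x α) (β - α) by rw [cpt_cpt, Nat.add_sub_cancel' h]]
    exact cwDist_cpt (cpt_mem hN x α) (by omega)
  · rw [show cpt N x β = cpt N (cpt N x α) (β + N - α) by
      rw [cpt_cpt, show α + (β + N - α) = β + N by omega, cpt_add_self]]
    exact cwDist_cpt (cpt_mem hN x α) (by omega)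

lemma mem_cblock {x len z : ℕ} : z ∈ cblock N x len ↔ ∃ u < len, cpt N x u = z := by
  simp [cblock]

lemma cblock_cpt (x a len : ℕ) :
    cblock N (cpt N x a) len = (Ico a (a + len)).image (cpt N x) := by
  ext z
  simp only [mem_cblock, cpt_cpt, mem_image, mem_Ico]
  constructor
  · rintro ⟨t, ht, rfl⟩
    exact ⟨a + t, by omega, rfl⟩
  · rintro ⟨u, hu, rfl⟩
    exact ⟨u - a, by omega, by rw [Nat.add_sub_cancel' hu.1]⟩

lemma cblock_add (x a b : ℕ) : cblock N x (a + b) = cblock N x a ∪ cblock N (cpt N x a) b := by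
  rw [cblock_cpt, cblock, cblock, range_eq_Ico, range_eq_Ico, ← image_union,
    Ico_union_Ico_eq_Ico (Nat.zero_le a) (Nat.le_add_right a b)]

lemma cblock_subset (hN : 0 < N) (x len : ℕ) : cblock N x len ⊆ Icc 1 N := by
  intro z hz
  obtain ⟨u, -, rfl⟩ := mem_cblock.mp hz
  exact cpt_mem hN x u

lemma cblock_self {x : ℕ} (hx : x ∈ Icc 1 N) : cblock N x N = Icc 1 N := by
  have hN : 0 < N := by rw [mem_Icc] at hx; omega
  refine (cblock_subset hN x N).antisymm fun z hz => mem_cblock.mpr ?_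
  exact ⟨cwDist N x z, cwDist_lt hN x z, cpt_cwDist hx hz⟩

lemma card_cblock_of_le {x len : ℕ} (h : len ≤ N) : #(cblock N x len) = len := by
  rw [cblock, card_image_of_injOn, card_range]
  exact (cpt_injOn x).mono fun u hu => by simp only [coe_range, Set.mem_Iio] at hu ⊢; omega

lemma card_cblock {x len : ℕ} (hN : 0 < N) : #(cblock N x len) = min len N := by
  rcases le_total len N with h | h
  · rw [card_cblock_of_le h, min_eq_left h]
  · rw [min_eq_right h]
    refine le_antisymm ?_ ?_
    · simpa using card_le_card (cblock_subset hN x len)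
    · have : cblock N x N ⊆ cblock N x len := by
        rw [← Nat.add_sub_cancel' h, cblock_add]; exact subset_union_left
      exact (card_cblock_of_le le_rfl).symm.le.trans (card_le_card this)

lemma disjoint_cblock_cpt (x : ℕ) {a k c l : ℕ} (hac : a + k ≤ c) (hcl : c + l ≤ N) :
    Disjoint (cblock N (cpt N x a) k) (cblock N (cpt N x c) l) := by
  rw [disjoint_left]
  intro z hz hz'
  rw [cblock_cpt, mem_image] at hz hz'
  obtain ⟨u, hu, rfl⟩ := hz
  obtain ⟨v, hv, hvu⟩ := hz'
  rw [mem_Ico] at hu hv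
  have := cpt_injOn x (by simp only [Set.mem_Iio]; omega) (by simp only [Set.mem_Iio]; omega) hvu
  omega

end Circle

section Walk

variable {N δ : ℕ} {X : Finset ℕ}

def walk (N δ x : ℕ) (X : Finset ℕ) (t : ℕ) : ℤ :=
  δ * #{u ∈ range t | cpt N x u ∈ X} - t

lemma walk_zero (x : ℕ) : walk N δ x X 0 = 0 := by simp [walk]

lemma walk_succ (x t : ℕ) :
    walk N δ x X (t + 1) = walk N δ x X t + (if cpt N x t ∈ X then (δ : ℤ) else 0) - 1 := by
  simp only [walk, range_add_one, filter_insert]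
  split_ifs with h
  · rw [card_insert_of_notMem (by simp)]; push_cast; ring
  · push_cast; ring

lemma walk_succ_of_mem {x t : ℕ} (h : cpt N x t ∈ X) :
    walk N δ x X (t + 1) = walk N δ x X t + δ - 1 := by
  rw [walk_succ, if_pos h]

lemma walk_succ_of_notMem {x t : ℕ} (h : cpt N x t ∉ X) :
    walk N δ x X (t + 1) = walk N δ x X t - 1 := by
  rw [walk_succ, if_neg h, add_zero]

lemma walk_succ_ge (x t : ℕ) : walk N δ x X t - 1 ≤ walk N δ x X (t + 1) := by
  rw [walk_succ]; split_ifs <;> omega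

lemma walk_add_of_notMem {x a t : ℕ} (h : ∀ v, a ≤ v → v < a + t → cpt N x v ∉ X) :
    walk N δ x X (a + t) = walk N δ x X a - t := by
  induction t with
  | zero => simp
  | succ t ih =>
    rw [← Nat.add_assoc, walk_succ_of_notMem (h _ (by omega) (by omega)),
      ih fun v h1 h2 => h v h1 (by omega)]
    push_cast; ring

lemma walk_cpt (x s t : ℕ) :
    walk N δ (cpt N x s) X t = walk N δ x X (s + t) - walk N δ x X s := by
  induction t with
  | zero => simp [walk_zero]
  | succ t ih => rw [walk_succ, ih, ← Nat.add_assoc, walk_succ, cpt_cpt]; ring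

lemma walk_eq_card {x t : ℕ} (ht : t ≤ N) :
    walk N δ x X t = δ * #(X ∩ cblock N x t) - t := by
  have hinj : Set.InjOn (cpt N x) ↑(range t) :=
    (cpt_injOn x).mono fun u hu => by simp only [coe_range, Set.mem_Iio] at hu ⊢; omega
  rw [walk, inter_comm, cblock, ← filter_mem_eq_inter, filter_image,
    card_image_of_injOn (hinj.mono (filter_subset _ _))]

lemma walk_self (hN : 0 < N) (hX : X ⊆ Icc 1 N) (x : ℕ) :
    walk N δ x X N = δ * #X - N := by
  have h := walk_cpt (N := N) (δ := δ) (X := X) x 0 N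
  rw [walk_zero, zero_add, sub_zero] at h
  rw [← h, walk_eq_card le_rfl, cblock_self (cpt_mem hN x 0), inter_eq_left.mpr hX]

lemma walk_add_self (hN : 0 < N) (hX : X ⊆ Icc 1 N) (x t : ℕ) :
    walk N δ x X (t + N) = walk N δ x X t + walk N δ x X N := by
  have h := walk_cpt (N := N) (δ := δ) (X := X) x t N
  rw [walk_self hN hX] at h ⊢
  omega

end Walk

section DenseArc

variable {N δ : ℕ} {X : Finset ℕ}

/-- `cblock N a (cwDist N a y + 1)` is the arc `[a, y]`. -/
def EndsDenseArc (N δ : ℕ) (X : Finset ℕ) (y : ℕ) : Prop :=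
  ∃ a ∈ X, cwDist N a y + 1 ≤ δ * #(X ∩ cblock N a (cwDist N a y + 1))

lemma walk_cpt_cwDist (hX : X ⊆ Icc 1 N) (x : ℕ) {α β : ℕ} (hα : α < N) (hβ : β < N) :
    walk N δ (cpt N x α) X (cwDist N (cpt N x α) (cpt N x β) + 1) =
      walk N δ x X (β + 1) + (if β < α then walk N δ x X N else 0) - walk N δ x X α := by
  rw [walk_cpt, cwDist_cpt_cpt x hα hβ]
  split_ifs
  · omega
  · rw [show α + (β - α + 1) = β + 1 by omega]; ring
  · rw [show α + (β + N - α + 1) = β + 1 + N by omega, walk_add_self (by omega) hX]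
  · omega

/-- The `if` accounts for the arcs that pass through `x`. -/
lemma endsDenseArc_cpt_iff (hX : X ⊆ Icc 1 N) {x : ℕ} (hx : x ∈ Icc 1 N) {β : ℕ}
    (hβ : β < N) :
    EndsDenseArc N δ X (cpt N x β) ↔ ∃ α < N, cpt N x α ∈ X ∧
      walk N δ x X α ≤ walk N δ x X (β + 1) + if β < α then walk N δ x X N else 0 := by
  have hN : 0 < N := by omega
  have key : ∀ α < N, (cwDist N (cpt N x α) (cpt N x β) + 1 ≤
      δ * #(X ∩ cblock N (cpt N x α) (cwDist N (cpt N x α) (cpt N x β) + 1)) ↔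
      walk N δ x X α ≤ walk N δ x X (β + 1) + if β < α then walk N δ x X N else 0) := by
    intro α hα
    have h := walk_cpt_cwDist (δ := δ) hX x hα hβ
    rw [walk_eq_card (show cwDist N _ _ + 1 ≤ N from cwDist_lt hN _ _)] at h
    push_cast at h
    constructor <;> intro h'
    · zify at h'; linarith
    · zify; linarith
  constructor
  · rintro ⟨a, ha, hdense⟩
    have haN := hX ha
    refine ⟨cwDist N x a, cwDist_lt hN x a, by rwa [cpt_cwDist hx haN], ?_⟩
    rw [← key _ (cwDist_lt hN x a), cpt_cwDist hx haN]
    exact hdense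
  · rintro ⟨α, hα, hmem, hle⟩
    exact ⟨_, hmem, (key α hα).mpr hle⟩

end DenseArc

end CircleBlocks

namespace CircData

open CircleBlocks

def start (S : CircData) (i : ℕ) : ℕ := ∑ j ∈ range i, (S.lenB j + S.lenG j)

variable {N : ℕ} (S : CircData)

@[simp] lemma start_zero : S.start 0 = 0 := by simp [start]

lemma start_succ (i : ℕ) : S.start (i + 1) = S.start i + S.lenB i + S.lenG i := by
  rw [start, sum_range_succ, ← add_assoc]; rfl

lemma start_mono : Monotone S.start :=
  monotone_nat_of_le_succ fun i => by rw [start_succ]; omega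

lemma exists_start_le_lt {k v : ℕ} (hv : v < S.start k) :
    ∃ i < k, S.start i ≤ v ∧ v < S.start (i + 1) := by
  induction k with
  | zero => simp at hv
  | succ k ih =>
    by_cases h : v < S.start k
    · obtain ⟨i, hi, h'⟩ := ih h
      exact ⟨i, by omega, h'⟩
    · exact ⟨k, by omega, by omega, hv⟩

lemma blk_union_gap (i : ℕ) : S.Blk N i ∪ S.Gap N i = cblock N (S.b i) (S.lenB i + S.lenG i) :=
  (cblock_add _ _ _).symm

lemma b_eq_of_chain (hb0 : S.b 0 ∈ Icc 1 N)
    (hchain : ∀ i, i + 1 < S.p → S.b (i + 1) = cpt N (S.b i) (S.lenB i + S.lenG i)) :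
    ∀ i < S.p, S.b i = cpt N (S.b 0) (S.start i) := by
  intro i
  induction i with
  | zero => intro; rw [start_zero, cpt_zero hb0]
  | succ i ih =>
    intro hi
    rw [hchain i hi, ih (by omega), cpt_cpt, start_succ, add_assoc]

lemma biUnion_blk_union_gap {k : ℕ} (hb : ∀ i < k, S.b i = cpt N (S.b 0) (S.start i)) :
    (range k).biUnion (fun i => S.Blk N i ∪ S.Gap N i) = cblock N (S.b 0) (S.start k) := by
  induction k with
  | zero => simp [cblock]
  | succ k ih =>
    rw [range_add_one, biUnion_insert, ih fun i hi => hb i (by omega), start_succ, add_assoc,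
      cblock_add, blk_union_gap, hb k (by omega), union_comm]

end CircData

namespace CircleBlocks

section Layout

variable {N δ : ℕ} {X : Finset ℕ}

structure IsBlockGap (N δ x : ℕ) (X : Finset ℕ) (u B G : ℕ) : Prop where
  pos : 0 < B
  mem : cpt N x u ∈ X
  walk_add_len : walk N δ x X (u + B) = walk N δ x X u
  lt_walk : ∀ t, 0 < t → t < B → walk N δ x X u < walk N δ x X (u + t)
  notMem : ∀ v, u + B ≤ v → v < u + B + G → cpt N x v ∉ X

structure IsWalkLayout (N δ : ℕ) (X : Finset ℕ) (S : CircData) : Prop where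
  p_pos : 0 < S.p
  start_p : S.start S.p = N
  b_eq : ∀ i < S.p, S.b i = cpt N (S.b 0) (S.start i)
  blockGap : ∀ i < S.p, IsBlockGap N δ (S.b 0) X (S.start i) (S.lenB i) (S.lenG i)

lemma isBlockGap_iff {x u B G : ℕ} (hB : B ≤ N) :
    IsBlockGap N δ x X u B G ↔ 0 < B ∧ cpt N x u ∈ X ∧
      δ * #(X ∩ cblock N (cpt N x u) B) = B ∧
      (∀ t, 0 < t → t < B → t + 1 ≤ δ * #(cblock N (cpt N x u) t ∩ X)) ∧
      ∀ z ∈ cblock N (cpt N (cpt N x u) B) G, z ∉ X := by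
  have hwalk : ∀ t ≤ N, walk N δ x X (u + t) - walk N δ x X u =
      δ * #(X ∩ cblock N (cpt N x u) t) - t := fun t ht => by
    rw [← walk_cpt, walk_eq_card ht]
  have hgap : (∀ z ∈ cblock N (cpt N (cpt N x u) B) G, z ∉ X) ↔
      ∀ v, u + B ≤ v → v < u + B + G → cpt N x v ∉ X := by
    rw [cpt_cpt, cblock_cpt, forall_mem_image]
    simp only [mem_Ico, and_imp]
  rw [hgap]
  constructor
  · rintro ⟨hpos, hmem, hend, hlt, hnot⟩
    refine ⟨hpos, hmem, ?_, fun t ht0 htB => ?_, hnot⟩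
    · have := hwalk B hB
      zify; omega
    · have := hwalk t (by omega)
      have := hlt t ht0 htB
      rw [inter_comm]; zify; omega
  · rintro ⟨hpos, hmem, hend, hlt, hnot⟩
    refine ⟨hpos, hmem, ?_, fun t ht0 htB => ?_, hnot⟩
    · have := hwalk B hB
      zify at hend; omega
    · have := hwalk t (by omega)
      have := hlt t ht0 htB
      rw [inter_comm] at this; zify at this; omega

variable {S : CircData}

lemma eq_of_sub_one_lt_of_le {a b : ℕ} (h1 : (a : ℝ) - 1 < b) (h2 : (b : ℝ) ≤ a) :
    a = b := by
  have : a < b + 1 := by exact_mod_cast (by linarith : (a : ℝ) < b + 1)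
  have : b ≤ a := by exact_mod_cast h2
  omega

theorem isWalkLayout_of_isBlockStructure (hX : X ⊆ Icc 1 N) (hsz : δ * #X < N)
    (hS : IsBlockStructure N X δ S) : IsWalkLayout N δ X S := by
  obtain ⟨hp, hB, hchain, -, hpart, hdisj, hBG, hbX, hgapX, hiii, hiv⟩ := hS
  have hN : 0 < N := by omega
  have hlenB : ∀ i < S.p, S.lenB i ≤ N := by
    intro i hi
    by_contra! h
    have h' := hiv i hi N hN h
    rw [cblock_self (hX (hbX i hi)), Nat.card_Icc, inter_eq_right.mpr hX] at h'
    have : N + 1 ≤ δ * #X := by exact_mod_cast h'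
    omega
  have hcard : ∀ i < S.p, #(S.Blk N i ∪ S.Gap N i) = S.lenB i + S.lenG i := by
    intro i hi
    have h1 := card_union_of_disjoint (hBG i hi)
    have h2 := card_le_card (cblock_subset hN (S.b i) (S.lenB i + S.lenG i))
    rw [← S.blk_union_gap, Nat.card_Icc] at h2
    rw [h1, CircData.Blk, CircData.Gap, card_cblock_of_le (hlenB i hi), card_cblock hN] at h2 ⊢
    have := hB i hi
    omega
  have hstart : S.start S.p = N := by
    have h := card_biUnion (s := range S.p) (t := fun i => S.Blk N i ∪ S.Gap N i)
      fun i hi j hj hij => hdisj i (mem_range.mp hi) j (mem_range.mp hj) hij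
    rw [hpart, Nat.card_Icc, sum_congr rfl fun i hi => hcard i (mem_range.mp hi)] at h
    exact h.symm
  have hb := S.b_eq_of_chain (hX (hbX 0 hp)) hchain
  refine ⟨hp, hstart, hb, fun i hi => ?_⟩
  rw [isBlockGap_iff (hlenB i hi), ← hb i hi]
  refine ⟨hB i hi, hbX i hi, ?_, fun t ht0 htB => ?_, hgapX i hi⟩
  · obtain ⟨h1, h2⟩ := hiii i hi
    rw [CircData.Blk, card_cblock_of_le (hlenB i hi)] at h1 h2
    exact eq_of_sub_one_lt_of_le (by push_cast; exact h1) (by push_cast; exact h2)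
  · have h := hiv i hi t ht0 htB
    rw [card_cblock_of_le (by linarith [hlenB i hi])] at h
    exact_mod_cast h

theorem IsWalkLayout.isBlockStructure (hS : IsWalkLayout N δ X S) :
    IsBlockStructure N X δ S := by
  obtain ⟨hp, hstart, hb, hblock⟩ := hS
  have hle : ∀ i < S.p, S.start i + S.lenB i + S.lenG i ≤ N := fun i hi => by
    rw [← S.start_succ, ← hstart]; exact S.start_mono hi
  have hN : 0 < N := by have := hle 0 hp; have := (hblock 0 hp).pos; omega
  have hb0 : S.b 0 ∈ Icc 1 N := by rw [hb 0 hp]; exact cpt_mem hN _ _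
  have hloc := fun i hi => (isBlockGap_iff (by have := hle i hi; omega)).mp (hblock i hi)
  refine ⟨hp, fun i hi => (hblock i hi).pos, fun i hi => ?_, ?_, ?_, fun i hi j hj hij => ?_,
    fun i hi => ?_, fun i hi => ?_, fun i hi => ?_, fun i hi => ?_, fun i hi t ht0 htB => ?_⟩
  · rw [hb (i + 1) hi, hb i (by omega), cpt_cpt, S.start_succ, add_assoc]
  · rw [hb (S.p - 1) (by omega), cpt_cpt, ← add_assoc, ← S.start_succ, Nat.sub_add_cancel hp,
      hstart, show cpt N (S.b 0) N = cpt N (S.b 0) (0 + N) by rw [zero_add], cpt_add_self,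
      cpt_zero hb0]
  · rw [S.biUnion_blk_union_gap hb, hstart, cblock_self hb0]
  · rw [S.blk_union_gap, S.blk_union_gap, hb i hi, hb j hj]
    rcases lt_or_gt_of_ne hij with h | h
    · exact disjoint_cblock_cpt _ (by rw [← add_assoc, ← S.start_succ]; exact S.start_mono h)
        (by have := hle j hj; omega)
    · exact (disjoint_cblock_cpt _ (by rw [← add_assoc, ← S.start_succ]; exact S.start_mono h)
        (by have := hle i hi; omega)).symm
  · rw [CircData.Blk, CircData.Gap, hb i hi, cpt_cpt]
    exact disjoint_cblock_cpt _ le_rfl (hle i hi)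
  · rw [hb i hi]; exact (hloc i hi).2.1
  · rw [CircData.Gap, hb i hi]; exact (hloc i hi).2.2.2.2
  · have h := (hloc i hi).2.2.1
    rw [CircData.Blk, hb i hi, card_cblock_of_le (by have := hle i hi; omega)]
    have h' : (δ : ℝ) * #(X ∩ cblock N (cpt N (S.b 0) (S.start i)) (S.lenB i)) = S.lenB i := by
      exact_mod_cast h
    constructor <;> linarith
  · have h := (hloc i hi).2.2.2.1 t ht0 htB
    rw [hb i hi, card_cblock_of_le (by have := hle i hi; omega)]
    exact_mod_cast h

end Layout

section Gaps

variable {N δ : ℕ} {X : Finset ℕ} {S : CircData}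

lemma IsWalkLayout.mem_gap_iff (hS : IsWalkLayout N δ X S) {i : ℕ} (hi : i < S.p) {z : ℕ} :
    z ∈ S.Gap N i ↔
      ∃ v, S.start i + S.lenB i ≤ v ∧ v < S.start (i + 1) ∧ cpt N (S.b 0) v = z := by
  rw [CircData.Gap, hS.b_eq i hi, cpt_cpt, cblock_cpt, mem_image, S.start_succ]
  simp only [mem_Ico, and_assoc]

lemma IsWalkLayout.walk_start_succ (hS : IsWalkLayout N δ X S) {i : ℕ} (hi : i < S.p) :
    walk N δ (S.b 0) X (S.start (i + 1)) = walk N δ (S.b 0) X (S.start i) - S.lenG i := by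
  have h := hS.blockGap i hi
  rw [S.start_succ, walk_add_of_notMem h.notMem, h.walk_add_len]

lemma IsWalkLayout.walk_start_anti (hS : IsWalkLayout N δ X S) {i j : ℕ} (hij : i ≤ j)
    (hj : j ≤ S.p) : walk N δ (S.b 0) X (S.start j) ≤ walk N δ (S.b 0) X (S.start i) := by
  induction j, hij using Nat.le_induction with
  | base => exact le_rfl
  | succ j _ ih => rw [hS.walk_start_succ (by omega)]; linarith [ih (by omega)]

lemma IsWalkLayout.walk_start_le (hS : IsWalkLayout N δ X S) {i t : ℕ} (hi : i < S.p)
    (ht : t ≤ S.lenB i) :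
    walk N δ (S.b 0) X (S.start i) ≤ walk N δ (S.b 0) X (S.start i + t) := by
  have h := hS.blockGap i hi
  rcases Nat.eq_zero_or_pos t with rfl | ht0
  · simp
  rcases ht.lt_or_eq with htB | rfl
  · exact (h.lt_walk t ht0 htB).le
  · exact h.walk_add_len.ge

lemma IsWalkLayout.walk_lt_of_gap (hS : IsWalkLayout N δ X S) {i v : ℕ} (hi : i < S.p)
    (hv : S.start i + S.lenB i ≤ v) (hv' : v < S.start (i + 1)) :
    walk N δ (S.b 0) X (v + 1) < walk N δ (S.b 0) X (S.start i) := by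
  have h := hS.blockGap i hi
  rw [S.start_succ] at hv'
  have := walk_add_of_notMem (δ := δ) (t := v + 1 - (S.start i + S.lenB i))
    fun w h1 h2 => h.notMem w h1 (by omega)
  rw [Nat.add_sub_cancel' (by omega), h.walk_add_len] at this
  omega

lemma IsWalkLayout.exists_block_of_mem (hS : IsWalkLayout N δ X S) {α : ℕ} (hα : α < N)
    (hmem : cpt N (S.b 0) α ∈ X) :
    ∃ i < S.p, S.start i ≤ α ∧ α < S.start i + S.lenB i := by
  obtain ⟨i, hi, h1, h2⟩ := S.exists_start_le_lt (hS.start_p ▸ hα : α < S.start S.p)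
  refine ⟨i, hi, h1, ?_⟩
  by_contra! h
  rw [S.start_succ] at h2
  exact (hS.blockGap i hi).notMem α h h2 hmem

lemma IsWalkLayout.b_zero_mem (hS : IsWalkLayout N δ X S) : S.b 0 ∈ Icc 1 N := by
  have h1 : S.start (0 + 1) ≤ N := hS.start_p ▸ S.start_mono hS.p_pos
  have := (hS.blockGap 0 hS.p_pos).pos
  rw [S.start_succ, S.start_zero] at h1
  rw [hS.b_eq 0 hS.p_pos]
  exact cpt_mem (by omega) _ _

lemma IsWalkLayout.not_endsDenseArc_of_mem_gap (hX : X ⊆ Icc 1 N) (hS : IsWalkLayout N δ X S)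
    {j y : ℕ} (hj : j < S.p) (hy : y ∈ S.Gap N j) : ¬ EndsDenseArc N δ X y := by
  obtain ⟨v, hv1, hv2, rfl⟩ := (hS.mem_gap_iff hj).mp hy
  rw [endsDenseArc_cpt_iff hX hS.b_zero_mem (hS.start_p ▸ hv2.trans_le (S.start_mono hj))]
  rintro ⟨α, hα, hmem, hle⟩
  obtain ⟨i, hi, hα1, hα2⟩ := hS.exists_block_of_mem hα hmem
  have hWα := hS.walk_start_le hi (t := α - S.start i) (by omega)
  rw [Nat.add_sub_cancel' hα1] at hWα
  have hWv := hS.walk_lt_of_gap hj hv1 hv2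
  split_ifs at hle
  · -- an arc through `b 0`: the walk ends a full turn below any block start
    have h0 := hS.walk_start_anti (Nat.zero_le j) hj.le
    have hp := hS.walk_start_anti hi.le le_rfl
    rw [S.start_zero, walk_zero] at h0
    rw [hS.start_p] at hp
    linarith
  · have hij : i ≤ j := by
      by_contra! h
      have : S.start (j + 1) ≤ S.start i := S.start_mono (by omega)
      omega
    linarith [hS.walk_start_anti hij hj.le]

lemma IsWalkLayout.mem_gapsUnion_of_not_endsDenseArc (hX : X ⊆ Icc 1 N)
    (hS : IsWalkLayout N δ X S) {y : ℕ} (hy : y ∈ Icc 1 N) (hnd : ¬ EndsDenseArc N δ X y) :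
    y ∈ S.gapsUnion N := by
  have hb0 := hS.b_zero_mem
  have hβ : cwDist N (S.b 0) y < N := cwDist_lt (by rw [mem_Icc] at hy; omega) _ _
  obtain ⟨i, hi, h1, h2⟩ := S.exists_start_le_lt (by rw [hS.start_p]; exact hβ)
  refine mem_biUnion.mpr
    ⟨i, mem_range.mpr hi, (hS.mem_gap_iff hi).mpr ⟨_, ?_, h2, cpt_cwDist hb0 hy⟩⟩
  by_contra! h
  refine hnd ?_
  rw [← cpt_cwDist hb0 hy, endsDenseArc_cpt_iff hX hb0 hβ]
  refine ⟨S.start i, h1.trans_lt hβ, (hS.blockGap i hi).mem, ?_⟩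
  rw [if_neg (by omega), add_zero]
  have := hS.walk_start_le hi (t := cwDist N (S.b 0) y + 1 - S.start i) (by omega)
  rwa [Nat.add_sub_cancel' (by omega)] at this

theorem IsWalkLayout.mem_gapsUnion_iff (hX : X ⊆ Icc 1 N) (hS : IsWalkLayout N δ X S) {y : ℕ} :
    y ∈ S.gapsUnion N ↔ y ∈ Icc 1 N ∧ ¬ EndsDenseArc N δ X y := by
  refine ⟨fun hy => ?_, fun hy => hS.mem_gapsUnion_of_not_endsDenseArc hX hy.1 hy.2⟩
  obtain ⟨j, hj, hyj⟩ := mem_biUnion.mp hy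
  have hN : 0 < N := by have := hS.b_zero_mem; rw [mem_Icc] at this; omega
  exact ⟨cblock_subset hN _ _ hyj, hS.not_endsDenseArc_of_mem_gap hX (mem_range.mp hj) hyj⟩

theorem subset_fdelta_iff (hX : X ⊆ Icc 1 N) (hsz : δ * #X < N) (hS : IsBlockStructure N X δ S)
    {C : Finset ℕ} (hC : C ⊆ Icc 1 N) :
    C ⊆ fdelta X S N ↔ ∀ y ∈ C \ X, ¬ EndsDenseArc N δ X y := by
  have hgaps := fun y => (isWalkLayout_of_isBlockStructure hX hsz hS).mem_gapsUnion_iff hX (y := y)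
  constructor
  · intro h y hy
    obtain ⟨hyC, hyX⟩ := mem_sdiff.mp hy
    rcases mem_union.mp (h hyC) with h' | h'
    · exact absurd h' hyX
    · exact ((hgaps y).mp h').2
  · intro h y hyC
    by_cases hyX : y ∈ X
    · exact mem_union_left _ hyX
    · exact mem_union_right _ ((hgaps y).mpr ⟨hC hyC, h y (mem_sdiff.mpr ⟨hyC, hyX⟩)⟩)

end Gaps

section Existence

variable {N δ : ℕ} {X : Finset ℕ}

lemma exists_mem_forall_walk_self_lt (hX : X ⊆ Icc 1 N) (hne : X.Nonempty) (hsz : δ * #X < N) :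
    ∃ x ∈ X, ∀ t < N, walk N δ x X N < walk N δ x X t := by
  have hN : 0 < N := by omega
  have hwN : walk N δ 1 X N < 0 := by
    rw [walk_self hN hX, sub_neg]; exact_mod_cast hsz
  have hper : ∀ t, walk N δ 1 X (t + N) = walk N δ 1 X t + walk N δ 1 X N :=
    walk_add_self hN hX 1
  set w := walk N δ 1 X with hw
  -- `s` is the first minimum of `w` on `[0, N)`; `s + v` the first point of `X` from there.
  have hexs : ∃ s, s < N ∧ ∀ t < N, w s ≤ w t := by
    obtain ⟨s, hs, hmin⟩ := exists_min_image (range N) w ⟨0, mem_range.mpr hN⟩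
    exact ⟨s, mem_range.mp hs, fun t ht => hmin t (mem_range.mpr ht)⟩
  obtain ⟨hsN, hsmin⟩ := Nat.find_spec hexs
  set s := Nat.find hexs
  have hsfirst : ∀ t < s, w s < w t := by
    intro t ht
    have := Nat.find_min hexs ht
    push Not at this
    obtain ⟨t', ht', hlt⟩ := this (by omega)
    exact (hsmin t' ht').trans_lt hlt
  obtain ⟨a, ha⟩ := hne
  have hwit : cpt N 1 (s + cwDist N (cpt N 1 s) a) ∈ X := by
    rw [← cpt_cpt, cpt_cwDist (cpt_mem hN 1 s) (hX ha)]; exact ha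
  have hexv : ∃ v, cpt N 1 (s + v) ∈ X := ⟨_, hwit⟩
  have hvN : Nat.find hexv < N := (Nat.find_min' hexv hwit).trans_lt (cwDist_lt hN _ _)
  set v := Nat.find hexv
  have hdesc : ∀ u ≤ v, w (s + u) = w s - u := fun u hu =>
    walk_add_of_notMem fun r h1 h2 => by
      have := Nat.find_min hexv (m := r - s) (by omega)
      rwa [Nat.add_sub_cancel' h1] at this
  refine ⟨cpt N 1 (s + v), Nat.find_spec hexv, fun t ht => ?_⟩
  rw [walk_cpt, walk_cpt, ← hw, hper, hdesc v le_rfl]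
  rcases lt_or_ge (s + v + t) N with hr | hr
  · have := hsmin _ hr
    linarith
  · rw [← Nat.sub_add_cancel hr, hper]
    rcases lt_or_ge (s + v + t - N) s with hr' | hr'
    · have := hsfirst _ hr'
      have : (0 : ℤ) ≤ v := by positivity
      linarith
    · have := hdesc (s + v + t - N - s) (by omega)
      rw [Nat.add_sub_cancel' hr'] at this
      rw [this]
      have : ((s + v + t - N - s : ℕ) : ℤ) < v := by
        exact_mod_cast (by omega : s + v + t - N - s < v)
      linarith

lemma exists_first_return {x u : ℕ} (hδ : 0 < δ) (hmem : cpt N x u ∈ X) (hu : u < N)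
    (hlow : walk N δ x X N < walk N δ x X u) :
    ∃ L, 0 < L ∧ u + L < N ∧ walk N δ x X (u + L) = walk N δ x X u ∧
      ∀ t, 0 < t → t < L → walk N δ x X u < walk N δ x X (u + t) := by
  have hstep : ∀ t, walk N δ x X t - 1 ≤ walk N δ x X (t + 1) := walk_succ_ge x
  have hfirst : walk N δ x X (u + 1) = walk N δ x X u + δ - 1 := walk_succ_of_mem hmem
  set W := walk N δ x X
  have hex : ∃ L, 0 < L ∧ u + L ≤ N ∧ W (u + L) ≤ W u :=
    ⟨N - u, by omega, by omega, by rw [Nat.add_sub_cancel' hu.le]; exact hlow.le⟩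
  obtain ⟨hL0, hLN, hLle⟩ := Nat.find_spec hex
  have habove : ∀ t, 0 < t → t < Nat.find hex → W u < W (u + t) := fun t ht0 ht => by
    have := Nat.find_min hex ht
    push Not at this
    exact this ht0 (by omega)
  have hLeq : W (u + Nat.find hex) = W u := by
    refine le_antisymm hLle ?_
    rcases Nat.lt_or_ge 1 (Nat.find hex) with h1 | h1
    · have h := hstep (u + (Nat.find hex - 1))
      rw [show u + (Nat.find hex - 1) + 1 = u + Nat.find hex by omega] at h
      have := habove (Nat.find hex - 1) (by omega) (by omega)
      linarith
    · rw [show Nat.find hex = 1 by omega, hfirst]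
      have : (1 : ℤ) ≤ δ := by exact_mod_cast hδ
      linarith
  refine ⟨Nat.find hex, hL0, ?_, hLeq, habove⟩
  rcases hLN.lt_or_eq with h | h
  · exact h
  · rw [h] at hLeq; exact absurd hLeq hlow.ne

lemma exists_blockGaps {x : ℕ} (hδ : 0 < δ)
    (hgood : ∀ t < N, walk N δ x X N < walk N δ x X t) :
    ∀ u < N, cpt N x u ∈ X → ∃ (p : ℕ) (B G : ℕ → ℕ), 0 < p ∧
      u + ∑ j ∈ range p, (B j + G j) = N ∧
      ∀ i < p, IsBlockGap N δ x X (u + ∑ j ∈ range i, (B j + G j)) (B i) (G i) := by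
  intro u
  induction hk : N - u using Nat.strong_induction_on generalizing u with
  | _ k ih =>
  intro hu hmem
  obtain ⟨L, hL0, hLN, hLeq, habove⟩ := exists_first_return hδ hmem hu (hgood u hu)
  have hblock : ∀ g, (∀ v, u + L ≤ v → v < u + L + g → cpt N x v ∉ X) →
      IsBlockGap N δ x X u L g := fun g hg => ⟨hL0, hmem, hLeq, habove, hg⟩
  by_cases hnext : ∃ v, u + L ≤ v ∧ v < N ∧ cpt N x v ∈ X
  · obtain ⟨hv1, hvN, hvX⟩ := Nat.find_spec hnext
    obtain ⟨p, B, G, hp, hsum, hBG⟩ := ih (N - Nat.find hnext) (by omega) _ rfl hvN hvX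
    refine ⟨p + 1, fun | 0 => L | i + 1 => B i, fun | 0 => Nat.find hnext - u - L | i + 1 => G i,
      p.succ_pos, ?_, ?_⟩
    · rw [sum_range_succ']; dsimp only; omega
    · rintro (_ | i) hi
      · simpa using hblock _ fun w h1 h2 hw =>
          Nat.find_min hnext (m := w) (by omega) ⟨h1, by omega, hw⟩
      · rw [sum_range_succ']; dsimp only
        convert hBG i (by omega) using 1; omega
  · push Not at hnext
    refine ⟨1, fun _ => L, fun _ => N - u - L, one_pos, by simp; omega, fun i hi => ?_⟩
    simpa [show i = 0 by omega] using hblock _ fun w h1 h2 => hnext w h1 (by omega)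

theorem exists_isWalkLayout (hX : X ⊆ Icc 1 N) (hne : X.Nonempty) (hδ : 0 < δ)
    (hsz : δ * #X < N) : ∃ S, IsWalkLayout N δ X S := by
  obtain ⟨x, hx, hgood⟩ := exists_mem_forall_walk_self_lt hX hne hsz
  have hx0 : cpt N x 0 = x := cpt_zero (hX hx)
  obtain ⟨p, B, G, hp, hsum, hBG⟩ :=
    exists_blockGaps hδ hgood 0 (by omega) (by rw [hx0]; exact hx)
  refine ⟨⟨p, fun i => cpt N x (∑ j ∈ range i, (B j + G j)), B, G⟩, hp,
    by simpa [CircData.start] using hsum,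
    fun i _ => ?_, fun i hi => ?_⟩
  · simp [CircData.start, hx0]
  · simpa [CircData.start, hx0] using hBG i hi

theorem exists_isBlockStructure (hX : X ⊆ Icc 1 N) (hne : X.Nonempty) (hδ : 0 < δ)
    (hsz : δ * #X < N) : ∃ S, IsBlockStructure N X δ S :=
  (exists_isWalkLayout hX hne hδ hsz).imp fun _ hS => hS.isBlockStructure

end Existence

section Exchange

variable {N δ : ℕ} {X : Finset ℕ}

lemma cwDist_lt_cwDist_of_le {x y e : ℕ} (hx : x ∈ Icc 1 N) (hy : y ∈ Icc 1 N)
    (he : e ∈ Icc 1 N) (hyx : y ≠ x) (h : cwDist N x e ≤ cwDist N y e) :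
    cwDist N x e < cwDist N x y := by
  have hN : 0 < N := by rw [mem_Icc] at hx; omega
  have hyx' : cwDist N x y ≠ 0 := fun h0 => hyx (by rw [← cpt_cwDist hx hy, h0, cpt_zero hx])
  have hye := cwDist_cpt_cpt (N := N) x (cwDist_lt hN x y) (cwDist_lt hN x e)
  rw [cpt_cwDist hx hy, cpt_cwDist hx he] at hye
  have := cwDist_lt hN x e
  split_ifs at hye <;> omega

lemma walk_insert_erase (hX : X ⊆ Icc 1 N) {x e : ℕ} (hx : x ∈ Icc 1 N) (hxX : x ∉ X)
    (he : e ∈ X) {t : ℕ} (ht : t ≤ N) :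
    walk N δ x (insert x (X.erase e)) t =
      walk N δ x X t + if 0 < t ∧ t ≤ cwDist N x e then (δ : ℤ) else 0 := by
  have hN : 0 < N := by rw [mem_Icc] at hx; omega
  have hcpt_e := cpt_cwDist hx (hX he)
  have hε : cwDist N x e < N := cwDist_lt hN x e
  have hε0 : 0 < cwDist N x e := Nat.pos_of_ne_zero fun h0 => hxX (by
    rwa [← hcpt_e, h0, cpt_zero hx] at he)
  induction t with
  | zero => simp [walk_zero]
  | succ t ih =>
    rw [walk_succ, walk_succ, ih (by omega)]
    have hinj := cpt_injOn (N := N) x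
    by_cases h0 : t = 0
    · subst h0
      rw [cpt_zero hx, if_pos (mem_insert_self _ _), if_neg hxX]
      split_ifs <;> omega
    by_cases hte : t = cwDist N x e
    · subst hte
      have he' : e ∉ insert x (X.erase e) := by
        rw [mem_insert, not_or]; exact ⟨fun h => hxX (h ▸ he), fun h => ne_of_mem_erase h rfl⟩
      rw [hcpt_e, if_pos he, if_neg he']
      split_ifs <;> omega
    have hne : cpt N x t ≠ e := fun h => hte (hinj (by simp; omega) (by simp; omega)
      (h.trans hcpt_e.symm))
    have hnx : cpt N x t ≠ x := fun h => h0 (hinj (by simp; omega) (by simp; omega)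
      (h.trans (cpt_zero hx).symm))
    simp only [mem_insert, mem_erase, hne, hnx, ne_eq, not_false_eq_true, true_and, false_or]
    split_ifs <;> omega

theorem not_endsDenseArc_insert_erase (hX : X ⊆ Icc 1 N) {x e y : ℕ} (hx : x ∈ Icc 1 N)
    (hxX : x ∉ X) (he : e ∈ X) (hy : y ∈ Icc 1 N) (hey : cwDist N x e < cwDist N x y)
    (hyX : ¬ EndsDenseArc N δ X y) : ¬ EndsDenseArc N δ (insert x (X.erase e)) y := by
  have hN : 0 < N := by rw [mem_Icc] at hx; omega
  have hX' : insert x (X.erase e) ⊆ Icc 1 N :=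
    insert_subset hx ((erase_subset e X).trans hX)
  have hβ := cwDist_lt hN x y
  have hW' := fun t (ht : t ≤ N) => walk_insert_erase (δ := δ) hX hx hxX he ht
  rw [← cpt_cwDist hx hy] at hyX ⊢
  rw [endsDenseArc_cpt_iff hX hx hβ] at hyX
  rw [endsDenseArc_cpt_iff hX' hx hβ]
  push Not at hyX
  rintro ⟨α, hα, hmem, hle⟩
  rw [hW' _ hα.le, hW' (cwDist N x y + 1) hβ, hW' N le_rfl,
    if_neg (show ¬(0 < cwDist N x y + 1 ∧ cwDist N x y + 1 ≤ cwDist N x e) by omega),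
    if_neg (show ¬(0 < N ∧ N ≤ cwDist N x e) by omega), add_zero, add_zero] at hle
  rcases Nat.eq_zero_or_pos α with rfl | hα0
  · -- the walk from `x` drops below `0` before the first point of `X`, which precedes `y`
    have hex : ∃ a, cpt N x a ∈ X := ⟨_, (cpt_cwDist hx (hX he)).symm ▸ he⟩
    have hfirst : walk N δ x X (0 + Nat.find hex) = walk N δ x X 0 - Nat.find hex :=
      walk_add_of_notMem fun v _ hv => Nat.find_min hex (by omega)
    have hle' : Nat.find hex ≤ cwDist N x e :=
      Nat.find_min' hex (by rw [cpt_cwDist hx (hX he)]; exact he)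
    have := hyX _ (by omega) (Nat.find_spec hex)
    rw [zero_add, walk_zero] at hfirst
    rw [walk_zero, if_neg (by omega)] at hle
    rw [if_neg (by omega)] at this
    omega
  · have hmemX : cpt N x α ∈ X := by
      rcases mem_insert.mp hmem with h | h
      · exact absurd (cpt_injOn x (by simp; omega) (by simp; omega) (h.trans (cpt_zero hx).symm))
          hα0.ne'
      · exact mem_of_mem_erase h
    have := hyX α hα hmemX
    split_ifs at hle <;> omega

lemma forall_not_endsDenseArc_exchange {T E A : Finset ℕ} (hEN : E ⊆ Icc 1 N)
    (hTN : T ⊆ Icc 1 N) (hET : Disjoint E T) (hAE : A ⊆ E) {e x : ℕ} (he : e ∈ A)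
    (hx : x ∈ E \ A) (hxmin : ∀ y ∈ E \ A, cwDist N x e ≤ cwDist N y e)
    (hgap : ∀ y ∈ E \ (A ∪ T), ¬ EndsDenseArc N δ (A ∪ T) y) :
    ∀ y ∈ E.erase e \ (insert x (A.erase e) ∪ T),
      ¬ EndsDenseArc N δ (insert x (A.erase e) ∪ T) y := by
  obtain ⟨hxE, hxA⟩ := mem_sdiff.mp hx
  have hxT : x ∉ T := disjoint_left.mp hET hxE
  have hunion : insert x (A.erase e) ∪ T = insert x ((A ∪ T).erase e) := by
    rw [erase_union_distrib, erase_eq_of_notMem (disjoint_left.mp hET (hAE he)), insert_union]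
  intro y hy
  simp only [mem_sdiff, mem_erase, mem_union, mem_insert, not_or] at hy
  obtain ⟨⟨hye, hyE⟩, ⟨hyx, hyA⟩, hyT⟩ := hy
  have hyA : y ∉ A := fun h => hyA ⟨hye, h⟩
  rw [hunion]
  exact not_endsDenseArc_insert_erase (union_subset (hAE.trans hEN) hTN) (hEN hxE)
    (by simp [hxA, hxT]) (mem_union_left T he) (hEN hyE)
    (cwDist_lt_cwDist_of_le (hEN hxE) (hEN hyE) (hEN (hAE he)) hyx
      (hxmin y (mem_sdiff.mpr ⟨hyE, hyA⟩))) (hgap y (by simp [hyE, hyA, hyT]))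

theorem exists_subset_forall_not_endsDenseArc {T D : Finset ℕ} (hTN : T ⊆ Icc 1 N) :
    ∀ E A : Finset ℕ, E ⊆ Icc 1 N → Disjoint E T → D ⊆ E → A ⊆ E → #A ≤ #D →
      (∀ y ∈ E \ (A ∪ T), ¬ EndsDenseArc N δ (A ∪ T) y) →
      ∃ A' ⊆ D, #A' = #A ∧ ∀ y ∈ D \ (A' ∪ T), ¬ EndsDenseArc N δ (A' ∪ T) y := by
  intro E
  induction E using Finset.strongInduction with
  | H E ih =>
  intro A hEN hET hDE hAE hAD hgap
  by_cases hAD' : A ⊆ D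
  · exact ⟨A, hAD', rfl, fun y hy => hgap y (sdiff_subset_sdiff hDE le_rfl hy)⟩
  obtain ⟨e, heA, heD⟩ := not_subset.mp hAD'
  have hne : (E \ A).Nonempty := by
    rw [sdiff_nonempty]
    intro hEA
    exact hAD' (eq_of_subset_of_card_le (hDE.trans hEA) hAD).symm.subset
  -- exchange `e` for the last point `x` of `E \ A` before it
  obtain ⟨x, hx, hxmin⟩ := exists_min_image (E \ A) (fun y => cwDist N y e) hne
  obtain ⟨hxE, hxA⟩ := mem_sdiff.mp hx
  have hcard : #(insert x (A.erase e)) = #A := by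
    rw [card_insert_of_notMem (fun h => hxA (mem_of_mem_erase h)), card_erase_of_mem heA,
      Nat.sub_add_cancel (card_pos.mpr ⟨e, heA⟩)]
  obtain ⟨A', hA'D, hA'c, hA'⟩ :=
    ih (E.erase e) (erase_ssubset (hAE heA)) (insert x (A.erase e))
    ((erase_subset _ _).trans hEN) (disjoint_of_subset_left (erase_subset _ _) hET)
    (fun z hz => mem_erase.mpr ⟨fun h => heD (h ▸ hz), hDE hz⟩)
    (insert_subset (mem_erase.mpr ⟨fun h => hxA (h ▸ heA), hxE⟩) (erase_subset_erase e hAE))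
    (hcard ▸ hAD) (forall_not_endsDenseArc_exchange hEN hTN hET hAE heA hx hxmin hgap)
  exact ⟨A', hA'D, hA'c.trans hcard, hA'⟩

end Exchange

lemma IsBlockStructure.nonempty {N : ℕ} {X : Finset ℕ} {δ : ℝ} {S : CircData}
    (hS : IsBlockStructure N X δ S) : X.Nonempty := by
  obtain ⟨hp, -, -, -, -, -, -, hbX, -⟩ := hS
  exact ⟨S.b 0, hbX 0 hp⟩

lemma disjoint_Icc_padding (n k : ℕ) : Disjoint (Icc 1 n) (Icc (n + 1) k) := by
  rw [disjoint_left]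
  intro a ha hb
  rw [mem_Icc] at ha hb
  omega

lemma union_padding {n m k : ℕ} {A : Finset ℕ} (hA : A ⊆ Icc 1 n) (hAc : #A = k)
    (hnm : 2 * n ≤ m) :
    A ∪ Icc (n + 1) (2 * n - k) ⊆ Icc 1 m ∧ #(A ∪ Icc (n + 1) (2 * n - k)) = n := by
  have := card_le_card hA
  rw [Nat.card_Icc] at this
  refine ⟨union_subset (hA.trans (Icc_subset_Icc le_rfl (by omega)))
    (Icc_subset_Icc (by omega) (by omega)), ?_⟩
  rw [card_union_of_disjoint (disjoint_of_subset_left hA (disjoint_Icc_padding n _)),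
    Nat.card_Icc]
  omega

end CircleBlocks

open CircleBlocks

theorem trimmed_not_covered_superset_general (d l n s m l' : ℕ) (hs1 : 1 ≤ s)
    (hm : m = (n + 1) * s + n)
    (D : Finset ℕ) (hDcard : D.card = d + l + l')
    (hnotcov : ∀ A : Finset ℕ, A ⊆ Finset.Icc 1 n → A.card = d + l →
      ∀ S : CircData,
        IsBlockStructure m (A ∪ Finset.Icc (n + 1) (2 * n - (d + l))) ((s : ℝ) + 1) S →
        ¬(A ⊆ D ∧
          D ⊆ fdelta (A ∪ Finset.Icc (n + 1) (2 * n - (d + l))) S m ∩ Finset.Icc 1 n)) :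
    ∀ E : Finset ℕ, D ⊆ E → E ⊆ Finset.Icc 1 n →
      ∀ A : Finset ℕ, A ⊆ Finset.Icc 1 n → A.card = d + l →
        ∀ S : CircData,
          IsBlockStructure m (A ∪ Finset.Icc (n + 1) (2 * n - (d + l))) ((s : ℝ) + 1) S →
          ¬(A ⊆ E ∧
            E ⊆ fdelta (A ∪ Finset.Icc (n + 1) (2 * n - (d + l))) S m ∩ Finset.Icc 1 n) := by
  rintro E hDE hEn A hA hAc S hS ⟨hAE, hEf⟩
  rw [← Nat.cast_succ] at hS hnotcov
  set T := Icc (n + 1) (2 * n - (d + l))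
  have hnm : 2 * n ≤ m := by rw [hm]; nlinarith
  have hsz : (s + 1) * n < m := by rw [hm]; nlinarith
  have hEm : E ⊆ Icc 1 m := hEn.trans (Icc_subset_Icc le_rfl (by omega))
  obtain ⟨hXA, hcardA⟩ := union_padding hA hAc hnm
  have hszA : (s + 1) * #(A ∪ T) < m := by rw [hcardA]; exact hsz
  obtain ⟨A', hA'D, hA'c, hA'⟩ := exists_subset_forall_not_endsDenseArc
    (union_subset_right hXA) E A hEm (disjoint_of_subset_left hEn (disjoint_Icc_padding n _))
    hDE hAE (by omega)
    ((subset_fdelta_iff hXA hszA hS hEm).mp (subset_inter_iff.mp hEf).1)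
  have hA'n : A' ⊆ Icc 1 n := hA'D.trans (hDE.trans hEn)
  obtain ⟨hXA', hcardA'⟩ := union_padding hA'n (hA'c.trans hAc) hnm
  have hszA' : (s + 1) * #(A' ∪ T) < m := by rw [hcardA']; exact hsz
  have hne : (A' ∪ T).Nonempty := by
    rw [← card_pos, hcardA', ← hcardA, card_pos]; exact hS.nonempty
  obtain ⟨S', hS'⟩ := exists_isBlockStructure hXA' hne s.succ_pos hszA'
  exact hnotcov A' hA'n (hA'c.trans hAc) S' hS' ⟨hA'D, subset_inter
    ((subset_fdelta_iff hXA' hszA' hS' (hDE.trans hEm)).mpr hA') (hDE.trans hEn)⟩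

/-- part of Proposition 3.3 of the paper. Let `d ≥ 1`, `l ≥ 0`,
`d + l ≤ n`, `1 ≤ s ≤ ⌊(n−d−l)/(d+l+1)⌋` and `m = (n+1)s + n`. For `A ⊆ [n]` with
`|A| = d + l`, let `Ã = A ∪ {n+1, …, 2n−(d+l)} ⊆ [m]`, and let
`𝓘_{n,d+l,s+1} = {[A, f_{s+1}(Ã) ∩ [n]] : A ⊆ [n], |A| = d+l}`. If `l' ≥ 1` and
`D ⊆ [n]` with `|D| = d + l + l'` is not covered by any element of `𝓘_{n,d+l,s+1}`,
then no superset of `D` in `[n]` is covered by an element of `𝓘_{n,d+l,s+1}`. -/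
theorem trimmed_not_covered_superset (d l n s m l' : ℕ) (hd : 1 ≤ d) (hdl : d + l ≤ n)
    (hs1 : 1 ≤ s) (hs2 : s ≤ (n - d - l) / (d + l + 1))
    (hm : m = (n + 1) * s + n) (hl' : 1 ≤ l')
    (D : Finset ℕ) (hD : D ⊆ Finset.Icc 1 n) (hDcard : D.card = d + l + l')
    (hnotcov : ∀ A : Finset ℕ, A ⊆ Finset.Icc 1 n → A.card = d + l →
      ∀ S : CircData,
        IsBlockStructure m (A ∪ Finset.Icc (n + 1) (2 * n - (d + l))) ((s : ℝ) + 1) S →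
        ¬(A ⊆ D ∧
          D ⊆ fdelta (A ∪ Finset.Icc (n + 1) (2 * n - (d + l))) S m ∩ Finset.Icc 1 n)) :
    ∀ E : Finset ℕ, D ⊆ E → E ⊆ Finset.Icc 1 n →
      ∀ A : Finset ℕ, A ⊆ Finset.Icc 1 n → A.card = d + l →
        ∀ S : CircData,
          IsBlockStructure m (A ∪ Finset.Icc (n + 1) (2 * n - (d + l))) ((s : ℝ) + 1) S →
          ¬(A ⊆ E ∧
            E ⊆ fdelta (A ∪ Finset.Icc (n + 1) (2 * n - (d + l))) S m ∩ Finset.Icc 1 n) :=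
  trimmed_not_covered_superset_general d l n s m l' hs1 hm D hDcard hnotcov
end
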